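/- arXiv:2201.06403 — 12 statements merged into one kernel-verified Lean document; each statement's English description precedes it below -/
import Mathlib

section
/- Every generalized numerical semigroup S ⊆ ℕ₀^d has at most one corner element; that is, the corner of S is unique. -/
open scoped BigOperators

/-- A generalized numerical semigroup (GNS): a submonoid of ℕ₀^d with finite complement. -/
def IsGNS {d : ℕ} (S : Set (Fin d → ℕ)) : Prop :=
  0 ∈ S ∧ (∀ x ∈ S, ∀ y ∈ S, x + y ∈ S) ∧ Sᶜ.Finite

/-- `c` is a corner of `S`: (1) any tuple whose i-th coordinate is ≥ c i lies in S;
(2) for each i with c i ≥ 1 there is a tuple with i-th coordinate c i − 1 outside S. -/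
def IsCornerOf {d : ℕ} (S : Set (Fin d → ℕ)) (c : Fin d → ℕ) : Prop :=
  c ∈ S ∧
  (∀ i : Fin d, ∀ x : Fin d → ℕ, c i ≤ x i → x ∈ S) ∧
  (∀ i : Fin d, c i = 0 ∨ ∃ x : Fin d → ℕ, x i + 1 = c i ∧ x ∉ S)

namespace IsCornerOf

variable {d : ℕ} {S : Set (Fin d → ℕ)} {c c' : Fin d → ℕ}

theorem lt_of_notMem (hc : IsCornerOf S c) {x : Fin d → ℕ} (hx : x ∉ S) (i : Fin d) :
    x i < c i :=
  Nat.lt_of_not_le fun h => hx (hc.2.1 i x h)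

theorem le (hc : IsCornerOf S c) (hc' : IsCornerOf S c') : c ≤ c' := by
  intro i
  rcases hc.2.2 i with hzero | ⟨x, hxc, hx⟩
  · simp [hzero]
  · exact hxc ▸ hc'.lt_of_notMem hx i

end IsCornerOf

theorem corner_unique_general {d : ℕ} (S : Set (Fin d → ℕ))
    (c c' : Fin d → ℕ) (hc : IsCornerOf S c) (hc' : IsCornerOf S c') : c = c' :=
  le_antisymm (hc.le hc') (hc'.le hc)

theorem corner_unique {d : ℕ} (S : Set (Fin d → ℕ)) (hS : IsGNS S)
    (c c' : Fin d → ℕ) (hc : IsCornerOf S c) (hc' : IsCornerOf S c') : c = c' :=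
  corner_unique_general S c c' hc hc'
end

section
/- Every generalized numerical semigroup S ⊆ ℕ₀^d has a corner element (existence follows from finiteness of the gap set). -/
open scoped BigOperators

/-!
Only finitely many tuples are gaps, so `c i`, one more than the largest `i`-th coordinate of a gap,
is finite; every tuple reaching `c i` in coordinate `i` is then in `S`, and `c i - 1` is the `i`-th
coordinate of a gap attaining that maximum.
-/

section GapBound

variable {ι : Type*}

def gapBound (F : Finset (ι → ℕ)) (i : ι) : ℕ :=
  F.sup fun x => x i + 1

theorem lt_gapBound {F : Finset (ι → ℕ)} {x : ι → ℕ} (hx : x ∈ F) (i : ι) : x i < gapBound F i :=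
  Nat.lt_of_succ_le (Finset.le_sup (f := fun x => x i + 1) hx)

theorem gapBound_eq_zero_or_exists (F : Finset (ι → ℕ)) (i : ι) :
    gapBound F i = 0 ∨ ∃ x ∈ F, x i + 1 = gapBound F i := by
  rcases F.eq_empty_or_nonempty with rfl | hF
  · exact Or.inl Finset.sup_empty
  · obtain ⟨x, hx, hmax⟩ := F.exists_mem_eq_sup hF fun x => x i + 1
    exact Or.inr ⟨x, hx, hmax.symm⟩

variable {S : Set (ι → ℕ)}

theorem mem_of_gapBound_le (hS : Sᶜ.Finite) {i : ι} {x : ι → ℕ}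
    (hx : gapBound hS.toFinset i ≤ x i) : x ∈ S := by
  by_contra hxS
  exact (lt_gapBound (hS.mem_toFinset.2 hxS) i).not_ge hx

theorem gapBound_mem (hS : Sᶜ.Finite) (h0 : (0 : ι → ℕ) ∈ S) : gapBound hS.toFinset ∈ S := by
  rcases isEmpty_or_nonempty ι with _ | ⟨⟨i⟩⟩
  · rwa [Subsingleton.elim (gapBound hS.toFinset) 0]
  · exact mem_of_gapBound_le hS (i := i) le_rfl

end GapBound

theorem corner_exists {d : ℕ} (S : Set (Fin d → ℕ)) (hS : IsGNS S) :
    ∃ c : Fin d → ℕ, IsCornerOf S c := by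
  obtain ⟨h0, -, hfin⟩ := hS
  refine ⟨gapBound hfin.toFinset, gapBound_mem hfin h0, fun _ _ => mem_of_gapBound_le hfin,
    fun i => ?_⟩
  rcases gapBound_eq_zero_or_exists hfin.toFinset i with h | ⟨x, hx, hxi⟩
  · exact Or.inl h
  · exact Or.inr ⟨x, hxi, hfin.mem_toFinset.1 hx⟩
end

section
/- Let S ⊆ ℕ₀^d be a GNS with positive genus and corner c. Then c = lub(PF(S)) + 1, where PF(S) = {x ∈ H(S) : x + s ∈ S for all s ∈ S \ {0}} is the set of pseudo-Frobenius elements. -/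
open scoped BigOperators

theorem corner_eq_lub_pseudoFrobenius_add_one {d : ℕ} (S : Set (Fin d → ℕ)) (hS : IsGNS S)
    (c : Fin d → ℕ) (hc : IsCornerOf S c) (hg : 0 < Set.ncard Sᶜ) :
    c = fun i =>
      sSup ((fun x => x i) '' {x ∈ Sᶜ | ∀ s ∈ S, s ≠ 0 → x + s ∈ S}) + 1 := by
  obtain ⟨hz, hadd, hfin⟩ := hS
  obtain ⟨hcS, hc1, hc2⟩ := hc
  funext i
  -- c i ≠ 0
  have hci : c i ≠ 0 := by
    intro h0
    have : Sᶜ = ∅ := by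
      ext x
      simp only [Set.mem_compl_iff, Set.mem_empty_iff_false, iff_false, not_not]
      exact hc1 i x (h0 ▸ Nat.zero_le _)
    rw [this] at hg
    simp at hg
  obtain ⟨x₀, hx₀i, hx₀S⟩ := (hc2 i).resolve_left hci
  -- the set T of gaps of the form x₀ + s
  set T : Set (Fin d → ℕ) := {y ∈ Sᶜ | ∃ s ∈ S, y = x₀ + s} with hT
  have hTfin : T.Finite := hfin.subset (fun y hy => hy.1)
  have hTne : T.Nonempty := ⟨x₀, hx₀S, 0, hz, by simp⟩
  obtain ⟨y, hyT, hymax⟩ := hTfin.exists_maximalFor (fun y => ∑ j, y j) T hTne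
  obtain ⟨hyc, s₀, hs₀S, hys⟩ := hyT
  -- y is pseudo-Frobenius
  have hyPF : ∀ s ∈ S, s ≠ 0 → y + s ∈ S := by
    intro s hsS hsne
    by_contra hns
    have hmem : y + s ∈ T := ⟨hns, s₀ + s, hadd _ hs₀S _ hsS, by rw [hys]; ring⟩
    have hle : (∑ j, y j) ≤ ∑ j, (y + s) j := by
      apply Finset.sum_le_sum
      intro j _
      simp [Pi.add_apply]
    have heq : (∑ j, (y + s) j) ≤ ∑ j, y j := hymax hmem hle
    have hsum : (∑ j, s j) = 0 := by
      have : (∑ j, (y + s) j) = (∑ j, y j) + ∑ j, s j := by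
        simp [Pi.add_apply, Finset.sum_add_distrib]
      omega
    apply hsne
    funext j
    have := Finset.sum_eq_zero_iff.mp hsum j (Finset.mem_univ j)
    simpa using this
  -- s₀ i = 0, so y i = x₀ i
  have hs₀i : s₀ i = 0 := by
    by_contra h
    apply hyc
    apply hc1 i
    have : y i = x₀ i + s₀ i := by rw [hys]; rfl
    omega
  have hyi : y i = x₀ i := by rw [hys]; simp [hs₀i]
  -- gaps have i-th coordinate ≤ x₀ i
  have hub : ∀ z ∈ Sᶜ, z i ≤ x₀ i := by
    intro z hz'
    by_contra h
    exact hz' (hc1 i z (by omega))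
  -- conclude sSup = x₀ i
  have hmemPF : y i ∈ (fun x => x i) '' {x ∈ Sᶜ | ∀ s ∈ S, s ≠ 0 → x + s ∈ S} :=
    ⟨y, ⟨hyc, hyPF⟩, rfl⟩
  have hsup : sSup ((fun x => x i) '' {x ∈ Sᶜ | ∀ s ∈ S, s ≠ 0 → x + s ∈ S}) = x₀ i := by
    apply le_antisymm
    · apply csSup_le ⟨y i, hmemPF⟩
      rintro n ⟨z, ⟨hz1, _⟩, rfl⟩
      exact hub z hz1
    · rw [← hyi]
      exact le_csSup ⟨x₀ i, by rintro n ⟨z, ⟨hz1, _⟩, rfl⟩; exact hub z hz1⟩ hmemPF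
  rw [hsup, ← hx₀i]
end

section
/- Let S ⊆ ℕ₀^d be a GNS with corner c and genus g > 0. Then S is the ordinary GNS O(c) = {0} ∪ (ℕ₀^d \ C(c − 1)) if and only if ∏_{i=1}^d c_i = g + 1. -/
open scoped BigOperators

theorem ordinary_iff_prod_corner_eq_genus_add_one {d : ℕ} (S : Set (Fin d → ℕ))
    (hS : IsGNS S) (c : Fin d → ℕ) (hc : IsCornerOf S c) (hg : 0 < Set.ncard Sᶜ) :
    S = {0} ∪ {a : Fin d → ℕ | ∀ i, a i + 1 ≤ c i}ᶜ ↔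
      ∏ i : Fin d, c i = Set.ncard Sᶜ + 1 := by
  obtain ⟨h0S, hadd, hfin⟩ := hS
  obtain ⟨hcS, hup, -⟩ := hc
  set C : Set (Fin d → ℕ) := {a | ∀ i, a i + 1 ≤ c i} with hCdef
  have hpos : ∀ i, 1 ≤ c i := by
    intro i
    by_contra h
    have hall : ∀ x : Fin d → ℕ, x ∈ S := fun x => hup i x (by omega)
    have hemp : Sᶜ = ∅ := by ext x; simp [hall x]
    rw [hemp] at hg; simp at hg
  have hCeq : C = ↑(Fintype.piFinset fun i => Finset.range (c i)) := by
    ext a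
    simp only [hCdef, Set.mem_setOf_eq, Finset.coe_sort_coe, Finset.mem_coe,
      Fintype.mem_piFinset, Finset.mem_range]
    exact forall_congr' fun i => by omega
  have hCfin : C.Finite := hCeq ▸ Finset.finite_toSet _
  have hCcard : C.ncard = ∏ i, c i := by
    rw [hCeq, Set.ncard_coe_finset, Fintype.card_piFinset]
    simp
  have h0C : (0 : Fin d → ℕ) ∈ C := fun i => by simpa using hpos i
  have hsub : Sᶜ ⊆ C \ {0} := by
    intro x hx
    refine ⟨?_, ?_⟩
    · by_contra hxC
      simp only [hCdef, Set.mem_setOf_eq, not_forall] at hxC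
      obtain ⟨i, hi⟩ := hxC
      exact hx (hup i x (by omega))
    · intro h0
      exact hx (by rw [Set.mem_singleton_iff] at h0; rw [h0]; exact h0S)
  have hdiff : (C \ {0}).ncard = ∏ i, c i - 1 := by
    rw [Set.ncard_diff_singleton_of_mem h0C, hCcard]
  have hprod_pos : 1 ≤ ∏ i, c i := Finset.one_le_prod' fun i _ => hpos i
  constructor
  · intro h
    have hScomp : Sᶜ = C \ {0} := by
      rw [h, Set.compl_union, compl_compl, Set.diff_eq, Set.inter_comm]
    rw [hScomp, hdiff]
    omega
  · intro h
    have hcard : (C \ {0}).ncard ≤ Sᶜ.ncard := by rw [hdiff]; omega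
    have hScomp : Sᶜ = C \ {0} :=
      Set.eq_of_subset_of_ncard_le hsub hcard (hCfin.diff)
    rw [← compl_compl S, hScomp, Set.diff_eq, Set.compl_inter, compl_compl,
      Set.union_comm]
end

section
/- Let S ⊂ ℕ₀^d be a GNS with corner c = (c₁,…,c_d) where c_i ≥ 2 for all i. Then there exists a GNS S' ⊂ ℕ₀^d with corner c such that every gap of S' lies on one of the coordinate axes of ℕ₀^d and g(S') ≤ g(S). -/
open scoped BigOperators

/-!
Replace the gaps of `S` by their projections onto the axes: `S'` is the complement of the
set of points `wᵢ eᵢ` with `w` a gap and `wᵢ ≠ 0`. If `a eᵢ, b eᵢ ∈ S'` with `a, b ≠ 0` and a gap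
`w` had `wᵢ = a + b`, then `w = (w with wᵢ := a) + b eᵢ` would be a sum of elements of `S`, since
no gap has `i`-th coordinate `a` or `b`; so `S'` is closed under addition. To bound its genus,
send `k eᵢ` to a gap with `i`-th coordinate `k` of least coordinate sum. A gap `z` cannot be
chosen this way for two axes `i ≠ j`: either `zᵢ eᵢ` is a gap with smaller sum, or it lies in
`S` and removing the `i`-th coordinate of `z` leaves a gap with the same `j`-th coordinate and
smaller sum.
-/

open Function

section AxisShadow

variable {ι : Type*} [DecidableEq ι] {S : Set (ι → ℕ)}

def axisShadow (S : Set (ι → ℕ)) : Set (ι → ℕ) :=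
  {x | ∃ i, ∃ w ∉ S, w i ≠ 0 ∧ x = Pi.single i (w i)}

lemma update_add_single {M : Type*} [AddZeroClass M] (w : ι → M) (i : ι) (a b : M) :
    update w i (a + b) = update w i a + Pi.single i b := by
  have h := update_add w 0 i a b
  rwa [add_zero] at h

lemma single_mem_axisShadow_iff {i : ι} {k : ℕ} :
    Pi.single i k ∈ axisShadow S ↔ k ≠ 0 ∧ ∃ w ∉ S, w i = k := by
  constructor
  · rintro ⟨j, w, hw, hwj, hx⟩
    obtain rfl : j = i := by
      by_contra hji
      exact hwj (by simpa [Pi.single_eq_of_ne hji] using (congrFun hx j).symm)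
    have hk : k = w j := by simpa using hx
    exact ⟨hk ▸ hwj, w, hw, hk.symm⟩
  · rintro ⟨hk, w, hw, rfl⟩
    exact ⟨i, w, hw, hk, rfl⟩

lemma zero_notMem_axisShadow : (0 : ι → ℕ) ∉ axisShadow S := by
  rintro ⟨i, w, -, hwi, h⟩
  exact hwi (by simpa using (congrFun h i).symm)

lemma eq_single_of_add_eq_single {x y : ι → ℕ} {i : ι} {k : ℕ}
    (h : x + y = Pi.single i k) : x = Pi.single i (x i) := by
  funext j
  rcases eq_or_ne j i with rfl | hji
  · simp
  · have := congrFun h j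
    simp only [Pi.add_apply, Pi.single_eq_of_ne hji] at this ⊢
    omega

lemma add_notMem_axisShadow (hadd : ∀ x ∈ S, ∀ y ∈ S, x + y ∈ S) {x y : ι → ℕ}
    (hx : x ∉ axisShadow S) (hy : y ∉ axisShadow S) : x + y ∉ axisShadow S := by
  rintro ⟨i, w, hw, hwi, hxy⟩
  have hsum : x i + y i = w i := by simpa using congrFun hxy i
  have hx' := eq_single_of_add_eq_single hxy
  have hy' := eq_single_of_add_eq_single ((add_comm y x).trans hxy)
  rw [hx', single_mem_axisShadow_iff] at hx
  rw [hy', single_mem_axisShadow_iff] at hy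
  push Not at hx hy
  rcases eq_or_ne (x i) 0 with hx0 | hx0
  · exact hy (by omega) w hw (by omega)
  rcases eq_or_ne (y i) 0 with hy0 | hy0
  · exact hx (by omega) w hw (by omega)
  refine hw ?_
  rw [← update_eq_self i w, ← hsum, update_add_single]
  refine hadd _ ?_ _ ?_
  · by_contra h
    exact hx hx0 _ h (update_self i _ w)
  · by_contra h
    exact hy hy0 _ h (by simp)

end AxisShadow

section MinimalGap

variable {ι : Type*} [Fintype ι] {S : Set (ι → ℕ)}

abbrev IsMinimalGapAt (S : Set (ι → ℕ)) (i : ι) (z : ι → ℕ) : Prop :=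
  MinimalFor (fun y => y ∉ S ∧ y i = z i) (fun y => ∑ j, y j) z

lemma exists_isMinimalGapAt {w : ι → ℕ} (hw : w ∉ S) (i : ι) :
    ∃ z, z i = w i ∧ IsMinimalGapAt S i z := by
  obtain ⟨z, ⟨hz, hzi⟩, hmin⟩ :=
    exists_minimalFor_of_wellFoundedLT (fun y => y ∉ S ∧ y i = w i) (fun y => ∑ j, y j) ⟨w, hw, rfl⟩
  exact ⟨z, hzi, ⟨hz, rfl⟩, fun y hy => hmin ⟨hy.1, hy.2.trans hzi⟩⟩

variable [DecidableEq ι]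

lemma sum_update_zero_add (z : ι → ℕ) (i : ι) :
    ∑ j, update z i 0 j + z i = ∑ j, z j := by
  conv_rhs => rw [← update_eq_self i z, ← zero_add (z i), update_add_single]
  simp [Finset.sum_add_distrib]

lemma IsMinimalGapAt.eq_of_ne_zero (hadd : ∀ x ∈ S, ∀ y ∈ S, x + y ∈ S) {i j : ι} {z : ι → ℕ}
    (hi : IsMinimalGapAt S i z) (hj : IsMinimalGapAt S j z) (hzi : z i ≠ 0) (hzj : z j ≠ 0) :
    i = j := by
  by_contra hij
  have hsum := sum_update_zero_add z i
  have hzj_le : z j ≤ ∑ k, update z i 0 k := by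
    simpa [update_of_ne (Ne.symm hij)] using
      Finset.single_le_sum (fun k _ => Nat.zero_le (update z i 0 k)) (Finset.mem_univ j)
  by_cases hs : Pi.single i (z i) ∈ S
  · have hgap : update z i 0 ∉ S := fun h =>
      hi.prop.1 (by simpa [← update_add_single] using hadd _ h _ hs)
    exact hj.not_lt ⟨hgap, update_of_ne (Ne.symm hij) _ _⟩ (by omega)
  · exact hi.not_lt ⟨hs, by simp⟩ (by
      simp only [Finset.sum_pi_single', Finset.mem_univ, if_true]
      omega)

lemma exists_injOn_axisShadow (hadd : ∀ x ∈ S, ∀ y ∈ S, x + y ∈ S) :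
    ∃ f, Set.MapsTo f (axisShadow S) Sᶜ ∧ Set.InjOn f (axisShadow S) := by
  have : ∀ x ∈ axisShadow S, ∃ z, ∃ i, z i ≠ 0 ∧ IsMinimalGapAt S i z ∧ x = Pi.single i (z i) := by
    rintro _ ⟨i, w, hw, hwi, rfl⟩
    obtain ⟨z, hzi, hz⟩ := exists_isMinimalGapAt hw i
    exact ⟨z, i, hzi ▸ hwi, hz, hzi ▸ rfl⟩
  choose! f hf using this
  refine ⟨f, fun x hx => ?_, fun x hx x' hx' hxx' => ?_⟩
  · obtain ⟨i, -, hz, -⟩ := hf x hx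
    exact hz.prop.1
  · obtain ⟨i, hi0, hi, hx⟩ := hf x hx
    obtain ⟨j, hj0, hj, hx'⟩ := hf x' hx'
    rw [← hxx'] at hj0 hj hx'
    obtain rfl := hi.eq_of_ne_zero hadd hj hi0 hj0
    rw [hx, hx']

end MinimalGap

lemma IsCornerOf.lt_of_notMem_s8 {d : ℕ} {S : Set (Fin d → ℕ)} {c : Fin d → ℕ} (hc : IsCornerOf S c)
    {w : Fin d → ℕ} (hw : w ∉ S) (i : Fin d) : w i < c i :=
  lt_of_not_ge fun h => hw (hc.2.1 i w h)

lemma isCornerOf_compl_axisShadow {d : ℕ} {S : Set (Fin d → ℕ)} {c : Fin d → ℕ}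
    (hc : IsCornerOf S c) (hc2 : ∀ i, 2 ≤ c i) : IsCornerOf (axisShadow S)ᶜ c := by
  refine ⟨?_, fun i x hx => ?_, fun i => ?_⟩
  · rintro ⟨i, w, hw, -, hcw⟩
    exact (hc.lt_of_notMem_s8 hw i).ne' (by rw [hcw, Pi.single_eq_same])
  · rintro ⟨j, w, hw, -, rfl⟩
    have hwj := hc.lt_of_notMem_s8 hw j
    rcases eq_or_ne i j with rfl | hij
    · rw [Pi.single_eq_same] at hx
      omega
    · rw [Pi.single_eq_of_ne hij] at hx
      have := hc2 i
      omega
  · have hci := hc2 i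
    obtain ⟨w, hwc, hw⟩ := (hc.2.2 i).resolve_left (by omega)
    refine Or.inr ⟨Pi.single i (w i), by rwa [Pi.single_eq_same], ?_⟩
    rw [Set.notMem_compl_iff, single_mem_axisShadow_iff]
    exact ⟨by omega, w, hw, rfl⟩

theorem exists_GNS_gaps_on_axes {d : ℕ} (S : Set (Fin d → ℕ)) (hS : IsGNS S)
    (c : Fin d → ℕ) (hc : IsCornerOf S c) (hc2 : ∀ i, 2 ≤ c i) :
    ∃ S' : Set (Fin d → ℕ), IsGNS S' ∧ IsCornerOf S' c ∧
      (∀ h ∈ S'ᶜ, ∃ i : Fin d, ∀ j : Fin d, j ≠ i → h j = 0) ∧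
      Set.ncard S'ᶜ ≤ Set.ncard Sᶜ := by
  obtain ⟨-, hadd, hfin⟩ := hS
  obtain ⟨f, hmaps, hinj⟩ := exists_injOn_axisShadow hadd
  have hshadow_fin : (axisShadow S).Finite :=
    Set.Finite.of_finite_image (hfin.subset hmaps.image_subset) hinj
  refine ⟨(axisShadow S)ᶜ,
    ⟨zero_notMem_axisShadow, fun _ hx _ hy => add_notMem_axisShadow hadd hx hy,
      by rwa [compl_compl]⟩,
    isCornerOf_compl_axisShadow hc hc2, ?_, ?_⟩
  · rw [compl_compl]
    rintro _ ⟨i, w, -, -, rfl⟩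
    exact ⟨i, fun j hj => Pi.single_eq_of_ne hj _⟩
  · rw [compl_compl]
    exact Set.ncard_le_ncard_of_injOn f hmaps hinj hfin
end

section
/- Let S ⊂ ℕ₀^d be a GNS with corner c = (c₁,…,c_d) where c_i ≥ 2 for all i. Then c₁ + ⋯ + c_d ≤ 2·g(S). -/
open scoped BigOperators

/-- Projection of the gap set to the `i`-th coordinate. -/
def projGaps {d : ℕ} (S : Set (Fin d → ℕ)) (i : Fin d) : Set ℕ :=
  {k | ∃ x, x ∉ S ∧ x i = k}

lemma projGaps_finite {d : ℕ} {S : Set (Fin d → ℕ)} (hS : Sᶜ.Finite) (i : Fin d) :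
    (projGaps S i).Finite := by
  have h : projGaps S i = (fun x => x i) '' Sᶜ := by
    ext k
    simp [projGaps, Set.mem_image, Set.mem_compl_iff]
  rw [h]
  exact hS.image _

/-- Co-additivity of the projected gaps. -/
lemma projGaps_add {d : ℕ} {S : Set (Fin d → ℕ)} (hS : IsGNS S) (i : Fin d) {a b : ℕ}
    (h : a + b ∈ projGaps S i) : a ∈ projGaps S i ∨ b ∈ projGaps S i := by
  obtain ⟨x, hx, hxi⟩ := h
  by_contra hcon
  push_neg at hcon
  obtain ⟨ha, hb⟩ := hcon
  have hy : Function.update x i a ∈ S := by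
    by_contra h'
    exact ha ⟨_, h', by simp⟩
  have hz : (fun j => if j = i then b else 0) ∈ S := by
    by_contra h'
    exact hb ⟨_, h', by simp⟩
  have hsum : Function.update x i a + (fun j => if j = i then b else 0) = x := by
    funext j
    by_cases hj : j = i
    · subst hj
      simp [Function.update_self, hxi]
    · simp [Function.update_of_ne hj, hj]
  exact hx (hsum ▸ hS.2.1 _ hy _ hz)

lemma projGaps_lt {d : ℕ} {S : Set (Fin d → ℕ)} {c : Fin d → ℕ}
    (hcor : ∀ i : Fin d, ∀ x : Fin d → ℕ, c i ≤ x i → x ∈ S) {i : Fin d} {k : ℕ}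
    (hk : k ∈ projGaps S i) : k < c i := by
  obtain ⟨x, hx, hxi⟩ := hk
  by_contra h
  push_neg at h
  exact hx (hcor i x (by omega))

lemma corner_pred_mem {d : ℕ} {S : Set (Fin d → ℕ)} {c : Fin d → ℕ}
    (hc : IsCornerOf S c) {i : Fin d} (hi : 2 ≤ c i) : c i - 1 ∈ projGaps S i := by
  rcases hc.2.2 i with h | ⟨x, hx1, hx2⟩
  · omega
  · exact ⟨x, hx2, by omega⟩

/-- The classical "half the interval are gaps" argument, coordinatewise. -/
lemma corner_le_two_mul_proj {d : ℕ} {S : Set (Fin d → ℕ)} (hS : IsGNS S)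
    {c : Fin d → ℕ} (hc : IsCornerOf S c) (i : Fin d) (hi : 2 ≤ c i) :
    c i ≤ 2 * ((projGaps S i) \ {0}).ncard := by
  classical
  have hfin : (projGaps S i).Finite := projGaps_finite hS.2.2 i
  have hfd : ((projGaps S i) \ {0}).Finite := hfin.diff
  set D : Finset ℕ := hfd.toFinset with hD
  have hDm : ∀ k : ℕ, k ∈ D ↔ k ∈ projGaps S i ∧ k ≠ 0 := by
    intro k
    simp [hD, Set.Finite.mem_toFinset, Set.mem_diff]
  have hncard : ((projGaps S i) \ {0}).ncard = D.card :=
    Set.ncard_eq_toFinset_card _ hfd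
  set φ : ℕ → ℕ := fun k => if k ∈ projGaps S i ∧ k ≠ 0 then k else c i - 1 - k with hφ
  have hmem : ∀ k ∈ Finset.range (c i), φ k ∈ D := by
    intro k hk
    rw [Finset.mem_range] at hk
    by_cases hcase : k ∈ projGaps S i ∧ k ≠ 0
    · rw [hφ]
      simp only [if_pos hcase]
      exact (hDm k).2 hcase
    · have hpred : c i - 1 ∈ projGaps S i := corner_pred_mem hc hi
      have hsplit : k ∈ projGaps S i ∨ c i - 1 - k ∈ projGaps S i := by
        apply projGaps_add hS i
        have : k + (c i - 1 - k) = c i - 1 := by omega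
        rw [this]; exact hpred
      have hknot : k ∉ projGaps S i ∨ k = 0 := by tauto
      have hres : c i - 1 - k ∈ projGaps S i ∧ c i - 1 - k ≠ 0 := by
        rcases hknot with h0 | h0
        · rcases hsplit with h1 | h1
          · exact absurd h1 h0
          · refine ⟨h1, ?_⟩
            intro hz
            have : k = c i - 1 := by omega
            exact h0 (this ▸ hpred)
        · subst h0
          have : c i - 1 - 0 = c i - 1 := by omega
          rw [this]
          exact ⟨hpred, by omega⟩
      rw [hφ]
      simp only [if_neg hcase]
      exact (hDm _).2 hres
  have hfiber : ∀ a ∈ (Finset.range (c i)).image φ,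
      ((Finset.range (c i)).filter (fun k => φ k = a)).card ≤ 2 := by
    intro a _
    have hsub : (Finset.range (c i)).filter (fun k => φ k = a) ⊆ {a, c i - 1 - a} := by
      intro k hk
      rw [Finset.mem_filter, Finset.mem_range] at hk
      obtain ⟨hk1, hk2⟩ := hk
      have hk2' : (if k ∈ projGaps S i ∧ k ≠ 0 then k else c i - 1 - k) = a := hk2
      clear hk2
      by_cases hcase : k ∈ projGaps S i ∧ k ≠ 0
      · rw [if_pos hcase] at hk2'
        simp [hk2']
      · rw [if_neg hcase] at hk2'
        have : k = c i - 1 - a := by omega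
        simp [this]
    calc ((Finset.range (c i)).filter (fun k => φ k = a)).card
        ≤ ({a, c i - 1 - a} : Finset ℕ).card := Finset.card_le_card hsub
      _ ≤ 2 := by
          apply le_trans (Finset.card_insert_le _ _)
          simp
  have h1 : (Finset.range (c i)).card ≤ 2 * ((Finset.range (c i)).image φ).card :=
    Finset.card_le_mul_card_image _ 2 hfiber
  have h2 : (Finset.range (c i)).image φ ⊆ D := by
    intro a ha
    rw [Finset.mem_image] at ha
    obtain ⟨k, hk, rfl⟩ := ha
    exact hmem k hk
  rw [Finset.card_range] at h1
  calc c i ≤ 2 * ((Finset.range (c i)).image φ).card := h1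
    _ ≤ 2 * D.card := by
        have := Finset.card_le_card h2
        omega
    _ = 2 * ((projGaps S i) \ {0}).ncard := by rw [hncard]

/-- The injection of marked projected gaps into gaps. -/
lemma sum_proj_le_genus {d : ℕ} {S : Set (Fin d → ℕ)} (hS : IsGNS S) :
    ∑ i : Fin d, ((projGaps S i) \ {0}).ncard ≤ Set.ncard Sᶜ := by
  classical
  set G : Finset (Fin d → ℕ) := hS.2.2.toFinset with hG
  have hGm : ∀ x : Fin d → ℕ, x ∈ G ↔ x ∉ S := by
    intro x; simp [hG, Set.Finite.mem_toFinset]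
  set w : (Fin d → ℕ) → ℕ := fun x => ∑ j, x j with hw
  have hex : ∀ i : Fin d, ∀ k : ℕ, ∃ x : Fin d → ℕ, k ∈ projGaps S i →
      x ∉ S ∧ x i = k ∧ ∀ y, y ∉ S → y i = k → w x ≤ w y := by
    intro i k
    by_cases hk : k ∈ projGaps S i
    · obtain ⟨x0, hx0, hx0i⟩ := hk
      have hne : (G.filter (fun x => x i = k)).Nonempty :=
        ⟨x0, by rw [Finset.mem_filter, hGm]; exact ⟨hx0, hx0i⟩⟩
      obtain ⟨x, hxmem, hxmin⟩ := Finset.exists_min_image _ w hne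
      rw [Finset.mem_filter, hGm] at hxmem
      refine ⟨x, fun _ => ⟨hxmem.1, hxmem.2, ?_⟩⟩
      intro y hy hyk
      exact hxmin y (by rw [Finset.mem_filter, hGm]; exact ⟨hy, hyk⟩)
    · exact ⟨0, fun h => absurd h hk⟩
  choose Ψ hΨ using hex
  have hfinD : ∀ i : Fin d, ((projGaps S i) \ {0}).Finite :=
    fun i => (projGaps_finite hS.2.2 i).diff
  set D : Fin d → Finset ℕ := fun i => (hfinD i).toFinset with hDdef
  have hDm : ∀ (i : Fin d) (k : ℕ), k ∈ D i ↔ k ∈ projGaps S i ∧ k ≠ 0 := by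
    intro i k
    simp [hDdef, Set.Finite.mem_toFinset, Set.mem_diff]
  have hcardeq : ∀ i : Fin d, ((projGaps S i) \ {0}).ncard = (D i).card :=
    fun i => Set.ncard_eq_toFinset_card _ (hfinD i)
  have hmain : (Finset.univ.sigma D).card ≤ G.card := by
    apply Finset.card_le_card_of_injOn (fun p => Ψ p.1 p.2)
    · rintro ⟨i, k⟩ hp
      rw [Finset.mem_coe, Finset.mem_sigma] at hp
      have hk := (hDm i k).1 hp.2
      have := hΨ i k hk.1
      rw [Finset.mem_coe, hGm]
      exact this.1
    · rintro ⟨i, k⟩ hp ⟨i', k'⟩ hq heq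
      dsimp only at heq
      simp only [Finset.coe_sigma, Set.mem_sigma_iff, Finset.mem_coe] at hp hq
      have hk := (hDm i k).1 hp.2
      have hk' := (hDm i' k').1 hq.2
      obtain ⟨hxS, hxi, hxmin⟩ := hΨ i k hk.1
      obtain ⟨hxS', hxi', hxmin'⟩ := hΨ i' k' hk'.1
      set x := Ψ i k with hx
      rw [← heq] at hxS' hxi' hxmin'
      by_cases hii : i = i'
      · subst hii
        have : k = k' := by rw [← hxi, ← hxi']
        subst this
        rfl
      · exfalso
        have hk1 : 1 ≤ k := Nat.one_le_iff_ne_zero.2 hk.2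
        have hk1' : 1 ≤ k' := Nat.one_le_iff_ne_zero.2 hk'.2
        set y : Fin d → ℕ := Function.update x i' 0 with hy
        set z : Fin d → ℕ := fun j => if j = i' then k' else 0 with hz
        have hyz : y + z = x := by
          funext j
          by_cases hj : j = i'
          · subst hj
            simp [hy, hz, Function.update_self, hxi']
          · simp [hy, hz, Function.update_of_ne hj, hj]
        have hwz : w z = k' := by
          simp [hw, hz, Finset.sum_ite_eq']
        have hwx : w x = w y + k' := by
          rw [← hyz, ← hwz]
          simp only [hw, Pi.add_apply]
          exact Finset.sum_add_distrib
        have hcases : y ∉ S ∨ z ∉ S := by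
          by_contra hcon
          push_neg at hcon
          exact hxS (hyz ▸ hS.2.1 y hcon.1 z hcon.2)
        rcases hcases with hyS | hzS
        · have hyi : y i = k := by
            rw [hy, Function.update_of_ne hii, hxi]
          have := hxmin y hyS hyi
          omega
        · have hzi' : z i' = k' := by simp [hz]
          have hle := hxmin' z hzS hzi'
          have hge : k + k' ≤ w x := by
            have hsub : ({i, i'} : Finset (Fin d)) ⊆ Finset.univ := Finset.subset_univ _
            have := Finset.sum_le_sum_of_subset (f := x) hsub
            rw [Finset.sum_pair hii] at this
            rw [hxi, hxi'] at this
            exact this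
          rw [hwz] at hle
          omega
  rw [Finset.card_sigma] at hmain
  have hGcard : G.card = Set.ncard Sᶜ := (Set.ncard_eq_toFinset_card _ hS.2.2).symm
  calc ∑ i : Fin d, ((projGaps S i) \ {0}).ncard
      = ∑ i : Fin d, (D i).card := by
        apply Finset.sum_congr rfl
        intro i _
        exact hcardeq i
    _ ≤ G.card := hmain
    _ = Set.ncard Sᶜ := hGcard

theorem sum_corner_le_two_mul_genus {d : ℕ} (S : Set (Fin d → ℕ)) (hS : IsGNS S)
    (c : Fin d → ℕ) (hc : IsCornerOf S c) (hc2 : ∀ i, 2 ≤ c i) :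
    ∑ i : Fin d, c i ≤ 2 * Set.ncard Sᶜ := by
  calc ∑ i : Fin d, c i
      ≤ ∑ i : Fin d, 2 * ((projGaps S i) \ {0}).ncard :=
        Finset.sum_le_sum fun i _ => corner_le_two_mul_proj hS hc i (hc2 i)
    _ = 2 * ∑ i : Fin d, ((projGaps S i) \ {0}).ncard := by rw [Finset.mul_sum]
    _ ≤ 2 * Set.ncard Sᶜ := Nat.mul_le_mul_left 2 (sum_proj_le_genus hS)
end

section
/- Let c = (c₁,…,c_d) ∈ ℕ₀^d with c_i ≥ 2 for all i. Then there exists a GNS T ⊂ ℕ₀^d with corner c and genus g(T) = ∑_{i=1}^d ⌈c_i/2⌉; moreover, every GNS with corner c has genus at least ∑_{i=1}^d ⌈c_i/2⌉. -/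
open scoped BigOperators

namespace LeastGenusAux

/-- The point `t • δ_i` on the `i`-th axis. -/
def eAx {d : ℕ} (i : Fin d) (t : ℕ) : Fin d → ℕ := fun k => if k = i then t else 0

lemma eAx_self {d : ℕ} (i : Fin d) (t : ℕ) : eAx i t i = t := by simp [eAx]

lemma eAx_apply_ne {d : ℕ} {i j : Fin d} (h : j ≠ i) (t : ℕ) : eAx i t j = 0 := by
  simp [eAx, h]

lemma eAx_zero {d : ℕ} (i : Fin d) : eAx i 0 = 0 := by
  funext k; by_cases h : k = i <;> simp [eAx, h]

lemma eAx_inj {d : ℕ} {i j : Fin d} {v w : ℕ} (hv : v ≠ 0) (h : eAx i v = eAx j w) :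
    i = j ∧ v = w := by
  by_cases hij : i = j
  · subst hij
    have h1 := congrFun h i
    rw [eAx_self, eAx_self] at h1
    exact ⟨rfl, h1⟩
  · have h1 := congrFun h i
    rw [eAx_self, eAx_apply_ne hij] at h1
    exact absurd h1 hv

lemma eAx_add {d : ℕ} (i : Fin d) (a b : ℕ) : eAx i a + eAx i b = eAx i (a + b) := by
  funext k; by_cases h : k = i <;> simp [eAx, h]

/-- The "staircase" numerical-semigroup predicate: `{0} ∪ [⌈c/2⌉, ∞) \ {c-1}`. -/
def NSp (c k : ℕ) : Prop := k = 0 ∨ ((c + 1) / 2 ≤ k ∧ k ≠ c - 1)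

lemma nsp_add {c a b : ℕ} (hc : 2 ≤ c) (ha : NSp c a) (hb : NSp c b) : NSp c (a + b) := by
  unfold NSp at *; omega

/-- The gaps of `NSp c` as a finset. -/
def gapF (c : ℕ) : Finset ℕ := insert (c - 1) (Finset.Ico 1 ((c + 1) / 2))

lemma mem_gapF {c k : ℕ} (hc : 2 ≤ c) : k ∈ gapF c ↔ k < c ∧ ¬ NSp c k := by
  unfold gapF NSp
  simp only [Finset.mem_insert, Finset.mem_Ico]
  omega

lemma card_gapF {c : ℕ} (hc : 2 ≤ c) : (gapF c).card = (c + 1) / 2 := by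
  unfold gapF
  rw [Finset.card_insert_of_notMem, Nat.card_Ico]
  · omega
  · simp only [Finset.mem_Ico]; omega

end LeastGenusAux

open LeastGenusAux in
theorem least_genus_with_corner {d : ℕ} (c : Fin d → ℕ) (hc : ∀ i, 2 ≤ c i) :
    (∃ T : Set (Fin d → ℕ), IsGNS T ∧ IsCornerOf T c ∧
        Set.ncard Tᶜ = ∑ i : Fin d, (c i + 1) / 2) ∧
      ∀ S : Set (Fin d → ℕ), IsGNS S → IsCornerOf S c →
        ∑ i : Fin d, (c i + 1) / 2 ≤ Set.ncard Sᶜ := by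
  classical
  constructor
  · -- Existence of the minimal-genus GNS
    set G : Set (Fin d → ℕ) := {z | ∃ i, ¬ NSp (c i) (z i) ∧ ∀ j, j ≠ i → z j = 0} with hGdef
    have hmemG : ∀ z : Fin d → ℕ,
        z ∈ G ↔ ∃ i, ¬ NSp (c i) (z i) ∧ ∀ j, j ≠ i → z j = 0 := fun z => Iff.rfl
    set Gfin : Finset (Fin d → ℕ) :=
      Finset.univ.biUnion (fun i => (gapF (c i)).image (eAx i)) with hGfdef
    have hcoe : (Gfin : Set (Fin d → ℕ)) = G := by
      ext z
      simp only [hGfdef, Finset.coe_biUnion, Finset.coe_univ, Set.mem_iUnion,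
        Finset.coe_image, Set.mem_image, Finset.mem_coe, Set.mem_univ, Set.iUnion_true]
      rw [hmemG]
      constructor
      · rintro ⟨i, k, hk, rfl⟩
        obtain ⟨hklt, hkns⟩ := (mem_gapF (hc i)).1 hk
        refine ⟨i, by rwa [eAx_self], fun j hj => eAx_apply_ne hj k⟩
      · rintro ⟨i, hns, hz⟩
        refine ⟨i, z i, (mem_gapF (hc i)).2 ⟨?_, hns⟩, ?_⟩
        · unfold NSp at hns
          have := hc i
          omega
        · funext k
          by_cases hk : k = i
          · subst hk; rw [eAx_self]
          · rw [eAx_apply_ne hk]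
            exact (hz k hk).symm
    refine ⟨Gᶜ, ⟨?_, ?_, ?_⟩, ⟨?_, ?_, ?_⟩, ?_⟩
    · -- 0 ∈ Gᶜ
      intro h0
      obtain ⟨i, hns, -⟩ := (hmemG 0).1 h0
      exact hns (Or.inl rfl)
    · -- closure
      intro x hx y hy hxy
      obtain ⟨i, hns, hz⟩ := (hmemG (x + y)).1 hxy
      have hx0 : ∀ j, j ≠ i → x j = 0 := by
        intro j hj
        have := hz j hj
        simp only [Pi.add_apply] at this
        omega
      have hy0 : ∀ j, j ≠ i → y j = 0 := by
        intro j hj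
        have := hz j hj
        simp only [Pi.add_apply] at this
        omega
      have hxi : NSp (c i) (x i) := by
        by_contra hni
        exact hx ((hmemG x).2 ⟨i, hni, hx0⟩)
      have hyi : NSp (c i) (y i) := by
        by_contra hni
        exact hy ((hmemG y).2 ⟨i, hni, hy0⟩)
      apply hns
      simpa only [Pi.add_apply] using nsp_add (hc i) hxi hyi
    · -- finite complement
      rw [compl_compl, ← hcoe]
      exact Gfin.finite_toSet
    · -- c ∈ Gᶜ
      intro hcG
      obtain ⟨i, hns, -⟩ := (hmemG c).1 hcG
      apply hns
      have := hc i
      right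
      omega
    · -- corner upper condition
      intro i xx hxx hxG
      obtain ⟨j, hns, hz⟩ := (hmemG xx).1 hxG
      by_cases hij : j = i
      · subst hij
        apply hns
        have := hc j
        right
        omega
      · have h0 : xx i = 0 := hz i (fun h => hij h.symm)
        have := hc i
        omega
    · -- corner witness condition
      intro i
      right
      refine ⟨eAx i (c i - 1), ?_, ?_⟩
      · rw [eAx_self]
        have := hc i
        omega
      · intro hmem
        apply hmem
        refine (hmemG _).2 ⟨i, ?_, fun j hj => eAx_apply_ne hj _⟩
        rw [eAx_self]
        unfold NSp
        have := hc i
        omega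
    · -- genus computation
      rw [compl_compl, ← hcoe, Set.ncard_coe_finset, hGfdef]
      rw [Finset.card_biUnion]
      · refine Finset.sum_congr rfl (fun i _ => ?_)
        rw [Finset.card_image_of_injOn, card_gapF (hc i)]
        intro a _ b _ hab
        have := congrFun hab i
        rwa [eAx_self, eAx_self] at this
      · intro i _ j _ hij
        rw [Function.onFun, Finset.disjoint_left]
        rintro z hzi hzj
        obtain ⟨k, hk, rfl⟩ := Finset.mem_image.1 hzi
        obtain ⟨k', hk', he⟩ := Finset.mem_image.1 hzj
        have hk0 : k ≠ 0 := by
          intro h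
          exact ((mem_gapF (hc i)).1 hk).2 (Or.inl h)
        exact hij (eAx_inj hk0 he.symm).1
  · -- Lower bound
    intro S hS hCorner
    obtain ⟨h0S, haddS, hfin⟩ := hS
    obtain ⟨-, hcond2, hcond3⟩ := hCorner
    set O : Fin d → (Fin d → ℕ) → ℕ := fun i z => ∑ k ∈ Finset.univ.erase i, z k with hOdef
    have hOlt : ∀ (ii jj : Fin d) (z : Fin d → ℕ) (v : ℕ), jj ≠ ii → v < z jj →
        O ii (Function.update z jj v) < O ii z := by
      intro ii jj z v hne hv
      have hjmem : jj ∈ Finset.univ.erase ii := Finset.mem_erase.2 ⟨hne, Finset.mem_univ _⟩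
      have h1 := (Finset.add_sum_erase (Finset.univ.erase ii) (Function.update z jj v) hjmem).symm
      have h2 := (Finset.add_sum_erase (Finset.univ.erase ii) z hjmem).symm
      have h3 : ∑ k ∈ (Finset.univ.erase ii).erase jj, Function.update z jj v k
          = ∑ k ∈ (Finset.univ.erase ii).erase jj, z k :=
        Finset.sum_congr rfl (fun k hk => Function.update_of_ne (Finset.mem_erase.1 hk).1 _ _)
      simp only [hOdef]
      rw [h1, h2, h3, Function.update_self]
      exact Nat.add_lt_add_right hv _
    -- minimal witnesses
    have hWex : ∀ i : Fin d, ∃ z : Fin d → ℕ, (z ∉ S ∧ z i = c i - 1) ∧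
        ∀ y : Fin d → ℕ, y ∉ S → y i = c i - 1 → O i z ≤ O i y := by
      intro i
      rcases hcond3 i with h0 | ⟨w, hw1, hw2⟩
      · exact absurd h0 (by have := hc i; omega)
      · have hwi : w i = c i - 1 := by omega
        set F : Finset (Fin d → ℕ) := hfin.toFinset.filter (fun z => z i = c i - 1) with hF
        have hwF : w ∈ F := by
          simp only [hF, Finset.mem_filter, Set.Finite.mem_toFinset, Set.mem_compl_iff]
          exact ⟨hw2, hwi⟩
        obtain ⟨z, hzF, hzmin⟩ := Finset.exists_min_image F (O i) ⟨w, hwF⟩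
        simp only [hF, Finset.mem_filter, Set.Finite.mem_toFinset, Set.mem_compl_iff] at hzF
        refine ⟨z, ⟨hzF.1, hzF.2⟩, fun y hy1 hy2 => hzmin y ?_⟩
        simp only [hF, Finset.mem_filter, Set.Finite.mem_toFinset, Set.mem_compl_iff]
        exact ⟨hy1, hy2⟩
    choose x hx hxmin using hWex
    have hxS : ∀ i, x i ∉ S := fun i => (hx i).1
    have hxi : ∀ i, (x i) i = c i - 1 := fun i => (hx i).2
    -- the harvest function
    set g : (Σ _ : Fin d, ℕ) → (Fin d → ℕ) := fun p =>
      if eAx p.1 p.2 ∈ S then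
        (if eAx p.1 (c p.1 - 1) ∈ S then Function.update (x p.1) p.1 (c p.1 - 1 - p.2)
         else eAx p.1 (c p.1 - 1 - p.2))
      else eAx p.1 p.2 with hgdef
    have hxoff : ∀ i, eAx i (c i - 1) ∈ S → ∃ k, k ≠ i ∧ x i k ≠ 0 := by
      intro i hai
      by_contra hcon
      push_neg at hcon
      apply hxS i
      have hxeq : x i = eAx i (c i - 1) := by
        funext k
        by_cases hk : k = i
        · subst hk; rw [eAx_self, hxi k]
        · rw [eAx_apply_ne hk, hcon k hk]
      rw [hxeq]
      exact hai
    have hline_notS : ∀ i t, t < (c i + 1) / 2 → eAx i t ∈ S →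
        Function.update (x i) i (c i - 1 - t) ∉ S := by
      intro i t ht hts hmem2
      apply hxS i
      have heq : Function.update (x i) i (c i - 1 - t) + eAx i t = x i := by
        funext k
        by_cases hk : k = i
        · subst hk
          simp only [Pi.add_apply, Function.update_self, eAx_self, hxi k]
          have := hc k
          omega
        · simp only [Pi.add_apply, Function.update_of_ne hk, eAx_apply_ne hk, add_zero]
      rw [← heq]
      exact haddS _ hmem2 _ hts
    have hmemg : ∀ p : (Σ _ : Fin d, ℕ), p.2 < (c p.1 + 1) / 2 → g p ∉ S := by
      rintro ⟨i, t⟩ htp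
      have ht : t < (c i + 1) / 2 := htp
      simp only [hgdef]
      by_cases h1 : eAx i t ∈ S
      · rw [if_pos h1]
        by_cases h2 : eAx i (c i - 1) ∈ S
        · rw [if_pos h2]
          exact hline_notS i t ht h1
        · rw [if_neg h2]
          intro hmem2
          apply h2
          have hsum : eAx i t + eAx i (c i - 1 - t) = eAx i (c i - 1) := by
            rw [eAx_add]
            have hcc := hc i
            have : t + (c i - 1 - t) = c i - 1 := by omega
            rw [this]
          rw [← hsum]
          exact haddS _ h1 _ hmem2
      · rw [if_neg h1]
        exact h1
    -- the key collision lemma: a line gap of axis i cannot be a line gap of axis j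
    have hbeat : ∀ (i j : Fin d) (s : ℕ), j ≠ i → s < (c j + 1) / 2 → 1 ≤ s →
        eAx j s ∈ S → (x i) j = c j - 1 - s → False := by
      intro i j s hji hs hs1 hjs hxij
      have hcj := hc j
      set u := Function.update (x i) j (c j - 1 - 2 * s) with hu
      have husum : u + eAx j s = x i := by
        funext k
        by_cases hk : k = j
        · subst hk
          simp only [Pi.add_apply, hu, Function.update_self, eAx_self]
          omega
        · simp only [Pi.add_apply, hu, Function.update_of_ne hk, eAx_apply_ne hk, add_zero]
      have huS : u ∉ S := by
        intro h
        exact hxS i (husum ▸ haddS u h _ hjs)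
      have hui : u i = c i - 1 := by
        rw [hu, Function.update_of_ne hji.symm]
        exact hxi i
      have hlt : O i u < O i (x i) := by
        apply hOlt i j (x i) _ hji
        omega
      have := hxmin i u huS hui
      omega
    have hbeat0 : ∀ (i j : Fin d), j ≠ i → eAx i (c i - 1) ∈ S → x i = x j → False := by
      intro i j hji hai hxx
      have hci := hc i
      set u := Function.update (x i) i 0 with hu
      have husum : u + eAx i (c i - 1) = x i := by
        funext k
        by_cases hk : k = i
        · subst hk
          simp only [Pi.add_apply, hu, Function.update_self, eAx_self, zero_add]
          exact (hxi k).symm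
        · simp only [Pi.add_apply, hu, Function.update_of_ne hk, eAx_apply_ne hk, add_zero]
      have huS : u ∉ S := by
        intro h
        exact hxS i (husum ▸ haddS u h _ hai)
      have huj : u j = c j - 1 := by
        rw [hu, Function.update_of_ne hji, hxx]
        exact hxi j
      have hlt : O j u < O j (x j) := by
        have h1 : O j u < O j (x i) := by
          apply hOlt j i (x i) 0 hji.symm
          rw [hxi i]
          omega
        rwa [hxx] at h1
      have := hxmin j u huS huj
      omega
    -- injectivity
    have hinj : Set.InjOn g ↑(Finset.univ.sigma (fun i => Finset.range ((c i + 1) / 2))) := by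
      rintro ⟨i, t⟩ hp ⟨j, s⟩ hq hgeq
      have ht : t < (c i + 1) / 2 := by
        have := (Finset.mem_sigma.1 (Finset.mem_coe.1 hp)).2
        simpa using this
      have hs : s < (c j + 1) / 2 := by
        have := (Finset.mem_sigma.1 (Finset.mem_coe.1 hq)).2
        simpa using this
      simp only [hgdef] at hgeq
      by_cases h1 : eAx i t ∈ S
      · rw [if_pos h1] at hgeq
        by_cases h2 : eAx j s ∈ S
        · rw [if_pos h2] at hgeq
          by_cases h3 : eAx i (c i - 1) ∈ S
          · rw [if_pos h3] at hgeq
            by_cases h4 : eAx j (c j - 1) ∈ S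
            · rw [if_pos h4] at hgeq
              -- line vs line
              by_cases hij : i = j
              · subst hij
                have hv := congrFun hgeq i
                rw [Function.update_self, Function.update_self] at hv
                have hts : t = s := by
                  have := hc i
                  omega
                subst hts
                rfl
              · exfalso
                have hxij : (x i) j = c j - 1 - s := by
                  have hv := congrFun hgeq j
                  rwa [Function.update_of_ne (fun h => hij h.symm), Function.update_self] at hv
                have hxji : (x j) i = c i - 1 - t := by
                  have hv := congrFun hgeq i
                  rw [Function.update_self, Function.update_of_ne hij] at hv
                  exact hv.symm
                rcases Nat.eq_zero_or_pos s with hs0 | hs1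
                · rcases Nat.eq_zero_or_pos t with ht0 | ht1
                  · subst hs0; subst ht0
                    have e1 : Function.update (x i) i (c i - 1 - 0) = x i := by
                      rw [Nat.sub_zero, ← hxi i]
                      exact Function.update_eq_self i (x i)
                    have e2 : Function.update (x j) j (c j - 1 - 0) = x j := by
                      rw [Nat.sub_zero, ← hxi j]
                      exact Function.update_eq_self j (x j)
                    rw [e1, e2] at hgeq
                    exact hbeat0 i j (fun h => hij h.symm) h3 hgeq
                  · exact hbeat j i t hij ht ht1 h1 hxji
                · exact hbeat i j s (fun h => hij h.symm) hs hs1 h2 hxij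
            · rw [if_neg h4] at hgeq
              -- line i vs axis j
              exfalso
              obtain ⟨k, hki, hk0⟩ := hxoff i h3
              have hc1 := congrFun hgeq k
              rw [Function.update_of_ne hki] at hc1
              by_cases hkj : k = j
              · subst hkj
                have hc2 := congrFun hgeq i
                rw [Function.update_self, eAx_apply_ne (fun h => hki h.symm)] at hc2
                have := hc i
                omega
              · rw [eAx_apply_ne hkj] at hc1
                exact hk0 hc1
          · rw [if_neg h3] at hgeq
            by_cases h4 : eAx j (c j - 1) ∈ S
            · rw [if_pos h4] at hgeq
              -- axis i vs line j
              exfalso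
              obtain ⟨k, hkj, hk0⟩ := hxoff j h4
              have hc1 := congrFun hgeq k
              rw [Function.update_of_ne hkj] at hc1
              by_cases hki : k = i
              · subst hki
                have hc2 := congrFun hgeq j
                rw [Function.update_self, eAx_apply_ne (fun h => hkj h.symm)] at hc2
                have := hc j
                omega
              · rw [eAx_apply_ne hki] at hc1
                exact hk0 hc1.symm
            · rw [if_neg h4] at hgeq
              -- axis vs axis, reflected values
              have hv : c i - 1 - t ≠ 0 := by
                have := hc i
                omega
              obtain ⟨hij, hval⟩ := eAx_inj hv hgeq
              subst hij
              have hts : t = s := by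
                have := hc i
                omega
              subst hts
              rfl
        · rw [if_neg h2] at hgeq
          by_cases h3 : eAx i (c i - 1) ∈ S
          · rw [if_pos h3] at hgeq
            -- line i vs plain axis j
            exfalso
            obtain ⟨k, hki, hk0⟩ := hxoff i h3
            have hc1 := congrFun hgeq k
            rw [Function.update_of_ne hki] at hc1
            by_cases hkj : k = j
            · subst hkj
              have hc2 := congrFun hgeq i
              rw [Function.update_self, eAx_apply_ne (fun h => hki h.symm)] at hc2
              have := hc i
              omega
            · rw [eAx_apply_ne hkj] at hc1
              exact hk0 hc1
          · rw [if_neg h3] at hgeq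
            -- reflected axis i vs plain axis j
            have hv : c i - 1 - t ≠ 0 := by
              have := hc i
              omega
            obtain ⟨hij, hval⟩ := eAx_inj hv hgeq
            subst hij
            exfalso
            have hts : t = s := by
              have := hc i
              omega
            rw [hts] at h1
            exact h2 h1
      · rw [if_neg h1] at hgeq
        have ht0 : t ≠ 0 := by
          intro h
          rw [h, eAx_zero] at h1
          exact h1 h0S
        by_cases h2 : eAx j s ∈ S
        · rw [if_pos h2] at hgeq
          by_cases h4 : eAx j (c j - 1) ∈ S
          · rw [if_pos h4] at hgeq
            -- plain axis i vs line j
            exfalso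
            obtain ⟨k, hkj, hk0⟩ := hxoff j h4
            have hc1 := congrFun hgeq k
            rw [Function.update_of_ne hkj] at hc1
            by_cases hki : k = i
            · subst hki
              have hc2 := congrFun hgeq j
              rw [Function.update_self, eAx_apply_ne (fun h => hkj h.symm)] at hc2
              have := hc j
              omega
            · rw [eAx_apply_ne hki] at hc1
              exact hk0 hc1.symm
          · rw [if_neg h4] at hgeq
            -- plain axis i vs reflected axis j
            obtain ⟨hij, hval⟩ := eAx_inj ht0 hgeq
            subst hij
            exfalso
            have hts : t = s := by
              have := hc i
              omega
            rw [hts] at h1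
            exact h1 h2
        · rw [if_neg h2] at hgeq
          obtain ⟨hij, hval⟩ := eAx_inj ht0 hgeq
          subst hij
          subst hval
          rfl
    -- conclude
    have hsub : (Finset.univ.sigma (fun i => Finset.range ((c i + 1) / 2))).image g
        ⊆ hfin.toFinset := by
      intro z hz
      obtain ⟨p, hp, rfl⟩ := Finset.mem_image.1 hz
      rw [Set.Finite.mem_toFinset]
      have hp2 : p.2 < (c p.1 + 1) / 2 := by
        have := (Finset.mem_sigma.1 hp).2
        simpa using this
      exact hmemg p hp2
    calc ∑ i : Fin d, (c i + 1) / 2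
        = (Finset.univ.sigma (fun i => Finset.range ((c i + 1) / 2))).card := by
          rw [Finset.card_sigma]
          simp
      _ = ((Finset.univ.sigma (fun i => Finset.range ((c i + 1) / 2))).image g).card :=
          (Finset.card_image_of_injOn hinj).symm
      _ ≤ hfin.toFinset.card := Finset.card_le_card hsub
      _ = Sᶜ.ncard := (Set.ncard_eq_toFinset_card _ hfin).symm
end

section
/- Let S ⊆ ℕ₀^d be a GNS with corner c and let x ∈ SG(S) be a special gap. Then S ∪ {x} has corner c if and only if ∇_i(S, c) ≠ {x} for all i ∈ [d]. -/
open scoped BigOperators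

/-!
Adding a gap `x` keeps the first two corner conditions, and the third one fails at `i` exactly
when `x` was the only gap of `S` with `i`-th coordinate `c i - 1`. Since every gap lies below the
corner, the gaps with `i`-th coordinate `c i - 1` are precisely `∇ᵢ(S, c)`.
-/

/-- The set `∇ᵢ(S, c)` of the paper. -/
def nabla {d : ℕ} (S : Set (Fin d → ℕ)) (c : Fin d → ℕ) (i : Fin d) : Set (Fin d → ℕ) :=
  {h ∈ Sᶜ | h i + 1 = c i ∧ ∀ j, j ≠ i → h j + 1 ≤ c j}

namespace IsCornerOf

variable {d : ℕ} {S : Set (Fin d → ℕ)} {c x : Fin d → ℕ} {i : Fin d}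

theorem add_one_le_of_notMem (hc : IsCornerOf S c) {h : Fin d → ℕ} (hh : h ∉ S) (j : Fin d) :
    h j + 1 ≤ c j := by
  by_contra hlt
  exact hh (hc.2.1 j h (by omega))

theorem mem_nabla_iff (hc : IsCornerOf S c) {h : Fin d → ℕ} :
    h ∈ nabla S c i ↔ h ∉ S ∧ h i + 1 = c i :=
  ⟨fun hh => ⟨hh.1, hh.2.1⟩, fun hh => ⟨hh.1, hh.2, fun j _ => hc.add_one_le_of_notMem hh.1 j⟩⟩

theorem union_singleton_iff (hc : IsCornerOf S c) :
    IsCornerOf (S ∪ {x}) c ↔ ∀ i, c i = 0 ∨ ∃ y : Fin d → ℕ, y i + 1 = c i ∧ y ∉ S ∧ y ≠ x := by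
  simp only [IsCornerOf, Set.mem_union, Set.mem_singleton_iff, not_or]
  exact ⟨fun h => h.2.2, fun h => ⟨Or.inl hc.1, fun j z hz => Or.inl (hc.2.1 j z hz), h⟩⟩

theorem nabla_ne_singleton_iff (hc : IsCornerOf S c) (hx : x ∉ S) :
    nabla S c i ≠ {x} ↔ c i = 0 ∨ ∃ y : Fin d → ℕ, y i + 1 = c i ∧ y ∉ S ∧ y ≠ x := by
  constructor
  · intro hne
    refine (hc.2.2 i).imp id fun ⟨y, hyi, hyS⟩ => ?_
    by_contra! honly
    refine hne (Set.eq_singleton_iff_unique_mem.2 ⟨?_, fun z hz => honly z hz.2.1 hz.1⟩)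
    obtain rfl := honly y hyi hyS
    exact hc.mem_nabla_iff.2 ⟨hyS, hyi⟩
  · rintro (hci | ⟨y, hyi, hyS, hyx⟩) heq
    · have hxi := (heq.symm ▸ Set.mem_singleton x : x ∈ nabla S c i).2.1
      omega
    · exact hyx (heq ▸ hc.mem_nabla_iff.2 ⟨hyS, hyi⟩ : y ∈ ({x} : Set _))

end IsCornerOf

theorem union_specialGap_corner_iff_general {d : ℕ} (S : Set (Fin d → ℕ))
    (c x : Fin d → ℕ) (hc : IsCornerOf S c)
    (hx : x ∈ Sᶜ ∧ (∀ s ∈ S, s ≠ 0 → x + s ∈ S) ∧ x + x ∈ S) :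
    IsCornerOf (S ∪ {x}) c ↔
      ∀ i : Fin d,
        {h ∈ Sᶜ | h i + 1 = c i ∧ ∀ j, j ≠ i → h j + 1 ≤ c j} ≠ {x} := by
  rw [hc.union_singleton_iff]
  exact forall_congr' fun i => (hc.nabla_ne_singleton_iff hx.1).symm

theorem union_specialGap_corner_iff {d : ℕ} (S : Set (Fin d → ℕ)) (hS : IsGNS S)
    (c x : Fin d → ℕ) (hc : IsCornerOf S c)
    (hx : x ∈ Sᶜ ∧ (∀ s ∈ S, s ≠ 0 → x + s ∈ S) ∧ x + x ∈ S) :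
    IsCornerOf (S ∪ {x}) c ↔
      ∀ i : Fin d,
        {h ∈ Sᶜ | h i + 1 = c i ∧ ∀ j, j ≠ i → h j + 1 ≤ c j} ≠ {x} :=
  union_specialGap_corner_iff_general S c x hc hx
end

section
/- Let T ⊆ ℕ₀^d be a nonordinary GNS with corner c, ≺ a monomial order on ℕ₀^d, and x = min_≺(L(T) \ {0}) where L(T) = {y ∈ T : y ≤ c − 1}. Then x is a minimal generator of T and T \ {x} is a GNS with corner c. -/
/-!
Since `≺` is compatible with addition and `0` is its minimum, every summand `a` of
`x = a + b` with `b ≠ 0` satisfies `a ≺ x`; such an `a` is again nonzero, in `T` and below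
`c - 1`, which contradicts the minimality of `x`. So `x` is indecomposable in `T` and may be
removed. The corner survives because `x` itself lies strictly below `c` in every coordinate.
-/

open scoped BigOperators

def IsIndecomposableIn {M : Type*} [AddMonoid M] (T : Set M) (x : M) : Prop :=
  ¬ ∃ a ∈ T, ∃ b ∈ T, a ≠ 0 ∧ b ≠ 0 ∧ x = a + b

theorem prec_self_add {M : Type*} [AddCommMonoid M] {prec : M → M → Prop}
    (hadd : ∀ a b g, prec a b → prec (a + g) (b + g)) (hzero : ∀ a : M, a ≠ 0 → prec 0 a)
    (a : M) {b : M} (hb : b ≠ 0) : prec a (a + b) := by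
  simpa only [zero_add, add_comm b a] using hadd 0 b a (hzero b hb)

theorem isIndecomposableIn_of_prec_min {d : ℕ} {T : Set (Fin d → ℕ)} {c x : Fin d → ℕ}
    {prec : (Fin d → ℕ) → (Fin d → ℕ) → Prop}
    (hirr : ∀ a, ¬ prec a a)
    (htrans : ∀ a b e, prec a b → prec b e → prec a e)
    (hadd : ∀ a b g, prec a b → prec (a + g) (b + g))
    (hzero : ∀ a : Fin d → ℕ, a ≠ 0 → prec 0 a)
    (hxc : ∀ i, x i + 1 ≤ c i)
    (hxmin : ∀ y ∈ T, (∀ i, y i + 1 ≤ c i) → y ≠ 0 → y ≠ x → prec x y) :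
    IsIndecomposableIn T x := by
  rintro ⟨a, ha, b, -, ha0, hb0, rfl⟩
  have hax : prec a (a + b) := prec_self_add hadd hzero a hb0
  have hac : ∀ i, a i + 1 ≤ c i := fun i => by
    have := hxc i
    simp only [Pi.add_apply] at this
    omega
  have hxa : prec (a + b) a :=
    hxmin a ha hac ha0 fun h => hirr a (by rwa [← h] at hax)
  exact hirr a (htrans a _ a hax hxa)

theorem IsGNS.diff_singleton {d : ℕ} {T : Set (Fin d → ℕ)} {x : Fin d → ℕ} (hT : IsGNS T)
    (hx0 : x ≠ 0) (hx : IsIndecomposableIn T x) : IsGNS (T \ {x}) := by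
  obtain ⟨h0, hadd, hfin⟩ := hT
  refine ⟨⟨h0, hx0.symm⟩, ?_, ?_⟩
  · rintro a ⟨ha, hax⟩ b ⟨hb, hbx⟩
    refine ⟨hadd a ha b hb, fun hsum => ?_⟩
    rcases eq_or_ne a 0 with rfl | ha0
    · exact hbx (by simpa using hsum)
    rcases eq_or_ne b 0 with rfl | hb0
    · exact hax (by simpa using hsum)
    exact hx ⟨a, ha, b, hb, ha0, hb0, (Set.mem_singleton_iff.mp hsum).symm⟩
  · rw [Set.compl_sdiff]
    exact (Set.finite_singleton x).union hfin

theorem IsCornerOf.diff_singleton {d : ℕ} {T : Set (Fin d → ℕ)} {c x : Fin d → ℕ}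
    (hc : IsCornerOf T c) (hxc : ∀ i, x i + 1 ≤ c i) (hx0 : x ≠ 0) :
    IsCornerOf (T \ {x}) c := by
  obtain ⟨hcT, hge, hsharp⟩ := hc
  have hcx : c ≠ x := by
    obtain ⟨i, -⟩ := Function.ne_iff.mp hx0
    intro h
    have := hxc i
    rw [h] at this
    omega
  refine ⟨⟨hcT, hcx⟩, fun i y hy => ⟨hge i y hy, ?_⟩, fun i => ?_⟩
  · rintro rfl
    have := hxc i
    omega
  · rcases hsharp i with h | ⟨y, hy, hyT⟩
    · exact Or.inl h
    · exact Or.inr ⟨y, hy, fun h => hyT h.1⟩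

theorem remove_low_of_nonordinary_general {d : ℕ} (T : Set (Fin d → ℕ)) (c x : Fin d → ℕ)
    (prec : (Fin d → ℕ) → (Fin d → ℕ) → Prop)
    (hirr : ∀ a, ¬ prec a a)
    (htrans : ∀ a b e, prec a b → prec b e → prec a e)
    (hadd : ∀ a b g, prec a b → prec (a + g) (b + g))
    (hzero : ∀ a : Fin d → ℕ, a ≠ 0 → prec 0 a)
    (hT : IsGNS T) (hc : IsCornerOf T c)
    (hxc : ∀ i, x i + 1 ≤ c i) (hx0 : x ≠ 0)
    (hxmin : ∀ y ∈ T, (∀ i, y i + 1 ≤ c i) → y ≠ 0 → y ≠ x → prec x y) :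
    (¬ ∃ a ∈ T, ∃ b ∈ T, a ≠ 0 ∧ b ≠ 0 ∧ x = a + b) ∧
      IsGNS (T \ {x}) ∧ IsCornerOf (T \ {x}) c := by
  have hx : IsIndecomposableIn T x :=
    isIndecomposableIn_of_prec_min hirr htrans hadd hzero hxc hxmin
  exact ⟨hx, hT.diff_singleton hx0 hx, hc.diff_singleton hxc hx0⟩

theorem remove_low_of_nonordinary {d : ℕ} (T : Set (Fin d → ℕ)) (c x : Fin d → ℕ)
    (prec : (Fin d → ℕ) → (Fin d → ℕ) → Prop)
    (htotal : ∀ a b, a ≠ b → prec a b ∨ prec b a)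
    (hirr : ∀ a, ¬ prec a a)
    (htrans : ∀ a b e, prec a b → prec b e → prec a e)
    (hadd : ∀ a b g, prec a b → prec (a + g) (b + g))
    (hzero : ∀ a : Fin d → ℕ, a ≠ 0 → prec 0 a)
    (hT : IsGNS T) (hc : IsCornerOf T c)
    (hxT : x ∈ T) (hxc : ∀ i, x i + 1 ≤ c i) (hx0 : x ≠ 0)
    (hxmin : ∀ y ∈ T, (∀ i, y i + 1 ≤ c i) → y ≠ 0 → y ≠ x → prec x y) :
    (¬ ∃ a ∈ T, ∃ b ∈ T, a ≠ 0 ∧ b ≠ 0 ∧ x = a + b) ∧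
      IsGNS (T \ {x}) ∧ IsCornerOf (T \ {x}) c :=
  remove_low_of_nonordinary_general T c x prec hirr htrans hadd hzero hT hc hxc hx0 hxmin
end

section
/- Let d ≥ 2, c = (c₁,…,c_d) ∈ ℕ^d with c_j > 1 for all j, and let J ⊆ [d] be nonempty. For every subset A ⊆ Ω_J(c), the set S = A ∪ O(c) is a GNS in ℕ₀^d with corner c. -/
section OrdinaryGNS

variable {d : ℕ}

/-- The box `C(c - 1)`, written without truncated subtraction. -/
def lowerBox (c : Fin d → ℕ) : Set (Fin d → ℕ) := {y | ∀ i, y i + 1 ≤ c i}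

def ordinaryGNS (c : Fin d → ℕ) : Set (Fin d → ℕ) := {0} ∪ (lowerBox c)ᶜ

/-- `Ω_J(c)`, with `⌈c_j / 2⌉` written as `(c j + 1) / 2`. -/
def omegaSet (J : Finset (Fin d)) (c : Fin d → ℕ) : Set (Fin d → ℕ) :=
  {x | (∀ j ∈ J, (c j + 1) / 2 ≤ x j ∧ x j + 1 ≤ c j) ∧ ∀ i ∉ J, x i < (c i + 1) / 2}

theorem lowerBox_finite (c : Fin d → ℕ) : (lowerBox c).Finite :=
  (Set.Finite.pi fun i => Set.finite_Iio (c i)).subset fun _ hy i _ => hy i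

theorem add_notMem_lowerBox {c x : Fin d → ℕ} (hx : x ∉ lowerBox c) (y : Fin d → ℕ) :
    x + y ∉ lowerBox c := fun hxy =>
  hx fun i => (Nat.add_le_add_right (Nat.le_add_right (x i) (y i)) 1).trans (hxy i)

theorem notMem_lowerBox_of_le {c x : Fin d → ℕ} {i : Fin d} (hx : c i ≤ x i) :
    x ∉ lowerBox c := fun h => by
  have := h i
  omega

theorem compl_union_ordinaryGNS_subset (A : Set (Fin d → ℕ)) (c : Fin d → ℕ) :
    (A ∪ ordinaryGNS c)ᶜ ⊆ lowerBox c := fun _ hx => by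
  by_contra h
  exact hx (Or.inr (Or.inr h))

theorem isGNS_union_ordinaryGNS {A : Set (Fin d → ℕ)} {c : Fin d → ℕ}
    (hA : ∀ x ∈ A, ∀ y ∈ A, x + y ∉ lowerBox c) : IsGNS (A ∪ ordinaryGNS c) := by
  have hideal : ∀ x y, x ∉ lowerBox c → x + y ∈ A ∪ ordinaryGNS c :=
    fun x y hx => Or.inr (Or.inr (add_notMem_lowerBox hx y))
  refine ⟨Or.inr (Or.inl rfl), ?_, (lowerBox_finite c).subset (compl_union_ordinaryGNS_subset A c)⟩
  rintro x (hx | rfl | hx) y (hy | rfl | hy)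
  · exact Or.inr (Or.inr (hA x hx y hy))
  · rw [add_zero]; exact Or.inl hx
  · rw [add_comm]; exact hideal y x hy
  · rw [zero_add]; exact Or.inl hy
  · rw [add_zero]; exact Or.inr (Or.inl rfl)
  · rw [zero_add]; exact Or.inr (Or.inr hy)
  all_goals exact hideal _ _ hx

theorem add_notMem_lowerBox_of_mem_omegaSet {J : Finset (Fin d)} {c x y : Fin d → ℕ} {j : Fin d}
    (hj : j ∈ J) (hx : x ∈ omegaSet J c) (hy : y ∈ omegaSet J c) : x + y ∉ lowerBox c := by
  have hxj := (hx.1 j hj).1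
  have hyj := (hy.1 j hj).1
  exact notMem_lowerBox_of_le (i := j) (by simp only [Pi.add_apply]; omega)

theorem isCornerOf_union_ordinaryGNS [Nonempty (Fin d)] {A : Set (Fin d → ℕ)} {c : Fin d → ℕ}
    (hgap : ∀ i, ∃ x ∈ lowerBox c, x i + 1 = c i ∧ x ≠ 0 ∧ x ∉ A) :
    IsCornerOf (A ∪ ordinaryGNS c) c := by
  refine ⟨Or.inr (Or.inr (notMem_lowerBox_of_le (i := Classical.arbitrary _) le_rfl)),
    fun i x hx => Or.inr (Or.inr (notMem_lowerBox_of_le hx)), fun i => Or.inr ?_⟩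
  obtain ⟨x, hxB, hxi, hx0, hxA⟩ := hgap i
  exact ⟨x, hxi, by rintro (h | h | h) <;> tauto⟩

theorem exists_mem_lowerBox_notMem_omegaSet [Nontrivial (Fin d)] {c : Fin d → ℕ}
    (hc : ∀ i, 1 < c i) (J : Finset (Fin d)) (i : Fin d) :
    ∃ x ∈ lowerBox c, x i + 1 = c i ∧ x ∉ omegaSet J c := by
  -- `x_i = c_i - 1` already breaks `Ω_J(c)` when `i ∉ J`; otherwise a coordinate `k ≠ i` breaks it.
  let x := Function.update (fun k => if k ∈ J then 0 else c k - 1) i (c i - 1)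
  obtain ⟨k, hki⟩ := exists_ne i
  have hxi : x i = c i - 1 := Function.update_self ..
  have hxk : x k = if k ∈ J then 0 else c k - 1 := Function.update_of_ne hki ..
  refine ⟨x, fun l => ?_, by have := hc i; omega, fun ⟨hJ, hJc⟩ => ?_⟩
  · have := hc l
    by_cases hl : l = i
    · subst hl; omega
    · simp only [x, Function.update_of_ne hl]; split_ifs <;> omega
  · have := hc i
    have := hc k
    by_cases hiJ : i ∈ J
    · by_cases hkJ : k ∈ J
      · have := (hJ k hkJ).1; simp only [hxk, hkJ, if_true] at this; omega
      · have := hJc k hkJ; simp only [hxk, hkJ, if_false] at this; omega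
    · have := hJc i hiJ; omega

end OrdinaryGNS

theorem union_Omega_ordinary_is_GNS {d : ℕ} (hd : 2 ≤ d) (c : Fin d → ℕ)
    (hc : ∀ i, 1 < c i) (J : Finset (Fin d)) (hJ : J.Nonempty)
    (A : Set (Fin d → ℕ))
    (hA : A ⊆ {x : Fin d → ℕ |
        (∀ j ∈ J, (c j + 1) / 2 ≤ x j ∧ x j + 1 ≤ c j) ∧
        ∀ i ∉ J, x i < (c i + 1) / 2}) :
    IsGNS (A ∪ ({0} ∪ {y : Fin d → ℕ | ∀ i, y i + 1 ≤ c i}ᶜ)) ∧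
      IsCornerOf (A ∪ ({0} ∪ {y : Fin d → ℕ | ∀ i, y i + 1 ≤ c i}ᶜ)) c := by
  have : Nontrivial (Fin d) := Fin.nontrivial_iff_two_le.mpr hd
  obtain ⟨j, hj⟩ := hJ
  refine ⟨isGNS_union_ordinaryGNS fun x hx y hy =>
      add_notMem_lowerBox_of_mem_omegaSet hj (hA hx) (hA hy),
    isCornerOf_union_ordinaryGNS fun i => ?_⟩
  obtain ⟨x, hxB, hxi, hxΩ⟩ := exists_mem_lowerBox_notMem_omegaSet hc J i
  have hx0 : x ≠ 0 := fun h => by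
    have := hc i
    simp only [h, Pi.zero_apply] at hxi
    omega
  exact ⟨x, hxB, hxi, hx0, fun h => hxΩ (hA h)⟩
end

section
/- Let d ≥ 2 and c = (c₁,…,c_d) ∈ ℕ^d with c_i > 1 for all i. Then the number N(c) of GNSs in ℕ₀^d with corner c satisfies N(c) ≥ 1 + ∑_{∅ ≠ J ⊆ [d]} (2^{n_J} − 1), where n_J = ∏_{j ∈ J} ⌊c_j/2⌋ · ∏_{t ∈ [d]\J} ⌈c_t/2⌉. -/
open scoped BigOperators

namespace GNSAux

variable {d : ℕ} (c : Fin d → ℕ)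

/-- The "ordinary" GNS with corner `c` : 0 together with everything outside the box. -/
def Ocor : Set (Fin d → ℕ) := {x | x = 0 ∨ ∃ i, c i ≤ x i}

/-- The cell `Ω_J(c)`. -/
def OmJ (J : Finset (Fin d)) : Finset (Fin d → ℕ) :=
  Fintype.piFinset fun i =>
    if i ∈ J then Finset.Ico ((c i + 1) / 2) (c i) else Finset.range ((c i + 1) / 2)

lemma mem_OmJ {J : Finset (Fin d)} {x : Fin d → ℕ} :
    x ∈ OmJ c J ↔
      ∀ i, if i ∈ J then (c i + 1) / 2 ≤ x i ∧ x i < c i else x i < (c i + 1) / 2 := by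
  simp only [OmJ, Fintype.mem_piFinset]
  refine forall_congr' fun i => ?_
  split <;> simp [Finset.mem_Ico]

lemma card_OmJ (hc : ∀ i, 1 < c i) (J : Finset (Fin d)) :
    (OmJ c J).card = (∏ j ∈ J, c j / 2) * ∏ t ∈ Jᶜ, (c t + 1) / 2 := by
  rw [OmJ, Fintype.card_piFinset, ← Finset.prod_mul_prod_compl J]
  congr 1
  · refine Finset.prod_congr rfl fun j hj => ?_
    rw [if_pos hj, Nat.card_Ico]
    have := hc j; omega
  · refine Finset.prod_congr rfl fun t ht => ?_
    rw [if_neg (Finset.mem_compl.mp ht), Finset.card_range]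

lemma omj_not_mem_O (hc : ∀ i, 1 < c i) {J : Finset (Fin d)} (hJ : J.Nonempty)
    {x : Fin d → ℕ} (hx : x ∈ OmJ c J) : x ∉ Ocor c := by
  rw [mem_OmJ] at hx
  rintro (rfl | ⟨i, hi⟩)
  · obtain ⟨j, hj⟩ := hJ
    have h1 := hx j
    rw [if_pos hj] at h1
    have := hc j
    simp only [Pi.zero_apply] at h1
    omega
  · have h1 := hx i
    have := hc i
    split at h1 <;> omega

lemma isGNS_union (hd : 2 ≤ d) (hc : ∀ i, 1 < c i) {J : Finset (Fin d)} (hJ : J.Nonempty)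
    {A : Finset (Fin d → ℕ)} (hA : A ⊆ OmJ c J) :
    IsGNS (↑A ∪ Ocor c) ∧ IsCornerOf (↑A ∪ Ocor c) c := by
  have hO : ∀ x : Fin d → ℕ, (∃ i, c i ≤ x i) → x ∈ (↑A ∪ Ocor c : Set (Fin d → ℕ)) :=
    fun x hx => Or.inr (Or.inr hx)
  constructor
  · refine ⟨Or.inr (Or.inl rfl), ?_, ?_⟩
    · rintro x (hx | hx | ⟨i, hi⟩)
      · rintro y (hy | hy | ⟨i, hi⟩)
        · -- both in A
          obtain ⟨j, hj⟩ := hJ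
          have h1 := (mem_OmJ c).mp (hA hx) j
          have h2 := (mem_OmJ c).mp (hA hy) j
          rw [if_pos hj] at h1 h2
          exact hO _ ⟨j, by simp only [Pi.add_apply]; omega⟩
        · rw [hy, add_zero]; exact Or.inl hx
        · exact hO _ ⟨i, by simp only [Pi.add_apply]; omega⟩
      · intro y hy; rw [hx, zero_add]; exact hy
      · intro y hy; exact hO _ ⟨i, by simp only [Pi.add_apply]; omega⟩
    · refine Set.Finite.subset
        (Finset.finite_toSet (Fintype.piFinset fun i => Finset.range (c i))) ?_
      intro x hx
      simp only [Finset.coe_sort_coe, Finset.mem_coe, Fintype.mem_piFinset, Finset.mem_range]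
      intro i
      by_contra h
      exact hx (hO x ⟨i, by omega⟩)
  · refine ⟨hO c ⟨⟨0, by omega⟩, le_refl _⟩, fun i x hx => hO x ⟨i, hx⟩, fun i => ?_⟩
    right
    set w : Fin d → ℕ := fun s => if s = i then c i - 1 else if s ∈ J then 0 else (c s + 1) / 2
      with hw
    refine ⟨w, by simp only [hw, if_pos rfl]; have := hc i; omega, ?_⟩
    rintro (hwA | hwO)
    · -- w ∈ A, but w ∉ OmJ c J
      obtain ⟨s, hs⟩ := Fintype.exists_ne_of_one_lt_card (by simp; omega) i
      have h1 := (mem_OmJ c).mp (hA hwA) s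
      have hws : w s = if s ∈ J then 0 else (c s + 1) / 2 := by
        simp only [hw, if_neg hs]
      by_cases hsJ : s ∈ J
      · rw [if_pos hsJ] at h1
        rw [if_pos hsJ] at hws
        have := hc s; omega
      · rw [if_neg hsJ] at h1
        rw [if_neg hsJ] at hws
        omega
    · rcases hwO with hw0 | ⟨t, ht⟩
      · have : w i = 0 := by rw [hw0]; rfl
        simp only [hw, if_pos rfl] at this
        have := hc i; omega
      · have hcw := hc t
        by_cases hti : t = i
        · subst hti; simp only [hw, if_pos rfl] at ht; omega
        · simp only [hw, if_neg hti] at ht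
          by_cases htJ : t ∈ J
          · rw [if_pos htJ] at ht; omega
          · rw [if_neg htJ] at ht; omega

lemma target_finite : {S : Set (Fin d → ℕ) | IsGNS S ∧ IsCornerOf S c}.Finite := by
  have hbox : ({x : Fin d → ℕ | ∀ i, x i < c i}).Finite := by
    refine Set.Finite.subset
      (Finset.finite_toSet (Fintype.piFinset fun i => Finset.range (c i))) ?_
    intro x hx
    simpa only [Finset.mem_coe, Fintype.mem_piFinset, Finset.mem_range, Set.mem_setOf_eq] using hx
  apply Set.Finite.of_finite_image (f := fun S => S ∩ {x | ∀ i, x i < c i})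
  · refine Set.Finite.subset hbox.finite_subsets ?_
    rintro _ ⟨S, -, rfl⟩
    exact Set.inter_subset_right
  · rintro S ⟨-, -, hS2, -⟩ S' ⟨-, -, hS2', -⟩ h
    have h : S ∩ {x | ∀ i, x i < c i} = S' ∩ {x | ∀ i, x i < c i} := h
    ext x
    by_cases hx : ∀ i, x i < c i
    · constructor
      · intro hxS
        have : x ∈ S ∩ {x | ∀ i, x i < c i} := ⟨hxS, hx⟩
        rw [h] at this
        exact this.1
      · intro hxS
        have : x ∈ S' ∩ {x | ∀ i, x i < c i} := ⟨hxS, hx⟩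
        rw [← h] at this
        exact this.1
    · push_neg at hx
      obtain ⟨i, hi⟩ := hx
      exact ⟨fun _ => hS2' i x hi, fun _ => hS2 i x hi⟩

end GNSAux

theorem lower_bound_number_of_GNS_with_corner {d : ℕ} (hd : 2 ≤ d) (c : Fin d → ℕ)
    (hc : ∀ i, 1 < c i) :
    1 + ∑ J ∈ (Finset.univ : Finset (Fin d)).powerset.erase ∅,
        (2 ^ ((∏ j ∈ J, c j / 2) * ∏ t ∈ Jᶜ, (c t + 1) / 2) - 1) ≤
      Set.ncard {S : Set (Fin d → ℕ) | IsGNS S ∧ IsCornerOf S c} := by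
  classical
  open GNSAux in
  have hne : Nonempty (Fin d) := ⟨⟨0, by omega⟩⟩
  set E : Finset (Finset (Fin d → ℕ)) :=
    ((Finset.univ : Finset (Fin d)).powerset.erase ∅).biUnion
      (fun J => (GNSAux.OmJ c J).powerset.erase ∅) with hE
  -- pairwise disjointness of the families of nonempty subsets of the cells
  have hdisj : ∀ J ∈ (Finset.univ : Finset (Fin d)).powerset.erase ∅,
      ∀ J' ∈ (Finset.univ : Finset (Fin d)).powerset.erase ∅, J ≠ J' →
        Disjoint ((GNSAux.OmJ c J).powerset.erase ∅) ((GNSAux.OmJ c J').powerset.erase ∅) := by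
    intro J _ J' _ hne'
    rw [Finset.disjoint_left]
    intro A hAJ hAJ'
    rw [Finset.mem_erase, Finset.mem_powerset] at hAJ hAJ'
    obtain ⟨a, ha⟩ := Finset.nonempty_of_ne_empty hAJ.1
    have h1 := (GNSAux.mem_OmJ c).mp (hAJ.2 ha)
    have h2 := (GNSAux.mem_OmJ c).mp (hAJ'.2 ha)
    apply hne'
    ext s
    have g1 := h1 s
    have g2 := h2 s
    by_cases hs : s ∈ J <;> by_cases hs' : s ∈ J' <;> simp [hs, hs'] at g1 g2 ⊢ <;> omega
  have hEcard : E.card = ∑ J ∈ (Finset.univ : Finset (Fin d)).powerset.erase ∅,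
      (2 ^ ((∏ j ∈ J, c j / 2) * ∏ t ∈ Jᶜ, (c t + 1) / 2) - 1) := by
    rw [hE, Finset.card_biUnion hdisj]
    refine Finset.sum_congr rfl fun J _ => ?_
    rw [Finset.card_erase_of_mem (Finset.empty_mem_powerset _), Finset.card_powerset,
      GNSAux.card_OmJ c hc J]
  have hnotmem : ∅ ∉ E := by
    simp only [hE, Finset.mem_biUnion]
    rintro ⟨J, -, hJ⟩
    exact (Finset.mem_erase.mp hJ).1 rfl
  -- every member of insert ∅ E is a (nonempty-cell-indexed) subset of some Ω_J with J nonempty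
  have hkey : ∀ A ∈ insert ∅ E, ∃ J : Finset (Fin d), J.Nonempty ∧ A ⊆ GNSAux.OmJ c J := by
    intro A hA
    rcases Finset.mem_insert.mp hA with rfl | hA
    · exact ⟨Finset.univ, Finset.univ_nonempty, by simp⟩
    · rw [hE, Finset.mem_biUnion] at hA
      obtain ⟨J, hJ, hAJ⟩ := hA
      rw [Finset.mem_erase, Finset.mem_powerset] at hAJ
      refine ⟨J, Finset.nonempty_of_ne_empty (Finset.mem_erase.mp hJ).1, hAJ.2⟩
  set g : Finset (Fin d → ℕ) → Set (Fin d → ℕ) := fun A => ↑A ∪ GNSAux.Ocor c with hg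
  have hmem : ∀ A ∈ insert ∅ E, g A ∈ {S : Set (Fin d → ℕ) | IsGNS S ∧ IsCornerOf S c} := by
    intro A hA
    obtain ⟨J, hJne, hAJ⟩ := hkey A hA
    exact GNSAux.isGNS_union c hd hc hJne hAJ
  have hinj : Set.InjOn g ↑(insert ∅ E) := by
    intro A hA A' hA' h
    obtain ⟨J, hJne, hAJ⟩ := hkey A (by simpa using hA)
    obtain ⟨J', hJne', hAJ'⟩ := hkey A' (by simpa using hA')
    ext a
    constructor
    · intro ha
      have haO : a ∉ GNSAux.Ocor c := GNSAux.omj_not_mem_O c hc hJne (hAJ ha)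
      have : a ∈ g A' := by rw [← h]; exact Or.inl (by exact_mod_cast ha)
      rcases this with h' | h'
      · exact_mod_cast h'
      · exact absurd h' haO
    · intro ha
      have haO : a ∉ GNSAux.Ocor c := GNSAux.omj_not_mem_O c hc hJne' (hAJ' ha)
      have : a ∈ g A := by rw [h]; exact Or.inl (by exact_mod_cast ha)
      rcases this with h' | h'
      · exact_mod_cast h'
      · exact absurd h' haO
  have hsub : ↑((insert ∅ E).image g) ⊆ {S : Set (Fin d → ℕ) | IsGNS S ∧ IsCornerOf S c} := by
    intro S hS
    simp only [Finset.coe_image, Set.mem_image, Finset.mem_coe] at hS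
    obtain ⟨A, hA, rfl⟩ := hS
    exact hmem A hA
  calc 1 + ∑ J ∈ (Finset.univ : Finset (Fin d)).powerset.erase ∅,
        (2 ^ ((∏ j ∈ J, c j / 2) * ∏ t ∈ Jᶜ, (c t + 1) / 2) - 1)
      = (insert ∅ E).card := by rw [Finset.card_insert_of_notMem hnotmem, hEcard]; omega
    _ = ((insert ∅ E).image g).card := (Finset.card_image_of_injOn hinj).symm
    _ = (↑((insert ∅ E).image g) : Set (Set (Fin d → ℕ))).ncard :=
        (Set.ncard_coe_finset _).symm
    _ ≤ Set.ncard {S : Set (Fin d → ℕ) | IsGNS S ∧ IsCornerOf S c} :=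
        Set.ncard_le_ncard hsub (GNSAux.target_finite c)
end

section
/- Let c = (c₁,…,c_d) ∈ ℕ^d with c_i > 1 for all i and let |c| = c₁⋯c_d. Then the number N(c) of GNSs in ℕ₀^d with corner c satisfies N(c) ≤ 2^{|c|−1} − (2^{|Ω_∅(c)|−1} − 1)·2^{|c|−|Ω_∅(c)|−1}. -/
open scoped BigOperators

noncomputable section Aux
open Classical

variable {d : ℕ} (c : Fin d → ℕ)

def BoxF : Finset (Fin d → ℕ) := Fintype.piFinset fun i => Finset.range (c i)

def OmF : Finset (Fin d → ℕ) := Fintype.piFinset fun i => Finset.range ((c i + 1) / 2)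

lemma mem_BoxF {x : Fin d → ℕ} : x ∈ BoxF c ↔ ∀ i, x i < c i := by
  simp [BoxF, Fintype.mem_piFinset]

lemma mem_OmF {x : Fin d → ℕ} : x ∈ OmF c ↔ ∀ i, x i < (c i + 1) / 2 := by
  simp [OmF, Fintype.mem_piFinset]

/-- key multiplication lemma -/
lemma key_mult (hc : ∀ i, 1 < c i) {x : Fin d → ℕ} (hx : x ∈ OmF c) (hx0 : x ≠ 0) :
    ∃ n : ℕ, 1 ≤ n ∧ (fun i => n * x i) ∈ BoxF c \ OmF c := by
  rw [mem_OmF] at hx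
  obtain ⟨i0, hi0⟩ : ∃ i, x i ≠ 0 := by
    by_contra h
    push_neg at h
    exact hx0 (funext h)
  have hc0 : 1 ≤ c i0 := le_of_lt (hc i0)
  have hP1 : ∀ i, 1 * x i < (c i + 1) / 2 := by intro i; simpa using hx i
  set N := Nat.findGreatest (fun n => ∀ i, n * x i < (c i + 1) / 2) (c i0) with hN
  have hN1 : 1 ≤ N := Nat.le_findGreatest hc0 hP1
  have hPN : ∀ i, N * x i < (c i + 1) / 2 := by
    rw [hN]
    exact Nat.findGreatest_spec (P := fun n => ∀ i, n * x i < (c i + 1) / 2) hc0 hP1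
  have hNlt : N < c i0 := by
    have h3 := hPN i0
    have h2 : N ≤ N * x i0 := Nat.le_mul_of_pos_right N (Nat.pos_of_ne_zero hi0)
    have h4 := hc i0
    omega
  have hPN1 : ¬ ∀ i, (N + 1) * x i < (c i + 1) / 2 := by
    exact Nat.findGreatest_is_greatest
      (P := fun n => ∀ i, n * x i < (c i + 1) / 2) (n := c i0) (by omega) (by omega)
  refine ⟨N + 1, by omega, ?_⟩
  rw [Finset.mem_sdiff, mem_BoxF, mem_OmF]
  constructor
  · intro i
    have h1 := hPN i
    have h2 := hx i
    have h3 : (N + 1) * x i = N * x i + x i := by ring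
    omega
  · exact hPN1

lemma mult_mem_closed (S : Set (Fin d → ℕ)) (hS : ∀ x ∈ S, ∀ y ∈ S, x + y ∈ S)
    {x : Fin d → ℕ} (hxS : x ∈ S) : ∀ n, 1 ≤ n → (fun i => n * x i) ∈ S := by
  intro n hn
  induction n, hn using Nat.le_induction with
  | base => simpa using hxS
  | succ m hm ih =>
    have := hS _ ih _ hxS
    have heq : (fun i => m * x i) + x = fun i => (m + 1) * x i := by
      funext i; simp [Pi.add_apply]; ring
    rwa [heq] at this

end Aux

noncomputable section Aux2
open Classical

variable {d : ℕ} (c : Fin d → ℕ)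

/-- For a finset `A`, pick an element of `BoxF c \ OmF c` that lies in every
addition-closed set containing `A`, if one exists. -/
noncomputable def mu (A : Finset (Fin d → ℕ)) : Fin d → ℕ :=
  if h : ∃ y, y ∈ BoxF c \ OmF c ∧
      ∀ S : Set (Fin d → ℕ), (∀ a ∈ S, ∀ b ∈ S, a + b ∈ S) → ↑A ⊆ S → y ∈ S then
    h.choose
  else 0

lemma mu_spec (hc : ∀ i, 1 < c i) {A : Finset (Fin d → ℕ)} (hA : A.Nonempty)
    (hAsub : A ⊆ (OmF c).erase 0) :
    mu c A ∈ BoxF c \ OmF c ∧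
      ∀ S : Set (Fin d → ℕ), (∀ a ∈ S, ∀ b ∈ S, a + b ∈ S) → ↑A ⊆ S → mu c A ∈ S := by
  have h : ∃ y, y ∈ BoxF c \ OmF c ∧
      ∀ S : Set (Fin d → ℕ), (∀ a ∈ S, ∀ b ∈ S, a + b ∈ S) → ↑A ⊆ S → y ∈ S := by
    obtain ⟨x, hxA⟩ := hA
    have hx := hAsub hxA
    rw [Finset.mem_erase] at hx
    obtain ⟨n, hn1, hn⟩ := key_mult c hc hx.2 hx.1
    refine ⟨fun i => n * x i, hn, fun S hS hAS => ?_⟩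
    exact mult_mem_closed S hS (hAS hxA) n hn1
  rw [mu, dif_pos h]
  exact h.choose_spec

end Aux2

noncomputable section Aux3
open Classical

variable {d : ℕ} (c : Fin d → ℕ)

/-- The family of candidate finsets. -/
noncomputable def GF : Finset (Finset (Fin d → ℕ)) :=
  (BoxF c).powerset.filter (fun T => 0 ∈ T ∧
    ((T ∩ ((OmF c).erase 0)).Nonempty → mu c (T ∩ ((OmF c).erase 0)) ∈ T))

lemma zero_mem_OmF (hc : ∀ i, 1 < c i) : (0 : Fin d → ℕ) ∈ OmF c := by
  rw [mem_OmF]; intro i; have := hc i; simp; omega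

lemma OmF_subset_BoxF : OmF c ⊆ BoxF c := by
  intro x hx
  rw [mem_OmF] at hx
  rw [mem_BoxF]
  intro i
  have := hx i
  omega

lemma T_eq (hc : ∀ i, 1 < c i) {T : Finset (Fin d → ℕ)} (h0 : 0 ∈ T) :
    T = insert 0 (T ∩ ((OmF c).erase 0)) ∪ (T \ OmF c) := by
  ext x
  simp only [Finset.mem_union, Finset.mem_insert, Finset.mem_inter, Finset.mem_erase,
    Finset.mem_sdiff]
  constructor
  · intro hx
    by_cases hxo : x ∈ OmF c
    · by_cases hx0 : x = 0
      · exact Or.inl (Or.inl hx0)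
      · exact Or.inl (Or.inr ⟨hx, hx0, hxo⟩)
    · exact Or.inr ⟨hx, hxo⟩
  · rintro (h | h)
    · rcases h with h | h
      · rwa [h]
      · exact h.1
    · exact h.1

lemma fiber_card_le (hc : ∀ i, 1 < c i) (A : Finset (Fin d → ℕ))
    (hA : A ∈ ((OmF c).erase 0).powerset) :
    ((GF c).filter (fun T => T ∩ ((OmF c).erase 0) = A)).card ≤
      if A = ∅ then 2 ^ ((BoxF c \ OmF c).card) else 2 ^ ((BoxF c \ OmF c).card - 1) := by
  rw [Finset.mem_powerset] at hA
  by_cases hAe : A = ∅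
  · rw [if_pos hAe]
    have : ((GF c).filter (fun T => T ∩ ((OmF c).erase 0) = A)).card ≤
        (BoxF c \ OmF c).powerset.card := by
      apply Finset.card_le_card_of_injOn (fun T => T \ OmF c)
      · intro T hT
        simp only [Finset.mem_coe, Finset.mem_filter, GF, Finset.mem_powerset] at hT ⊢
        exact Finset.sdiff_subset_sdiff hT.1.1 (le_refl _)
      · intro T1 hT1 T2 hT2 heq
        simp only [Finset.mem_coe, Finset.mem_filter, GF, Finset.mem_powerset] at hT1 hT2
        have e1 := T_eq c hc hT1.1.2.1
        have e2 := T_eq c hc hT2.1.2.1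
        rw [hT1.2, hT2.2] at *
        rw [e1, e2]
        exact congrArg (fun B => insert 0 A ∪ B) heq
    simpa using this
  · rw [if_neg hAe]
    have hAne : A.Nonempty := Finset.nonempty_of_ne_empty hAe
    obtain ⟨hmu1, _⟩ := mu_spec c hc hAne hA
    have hmucard : ((BoxF c \ OmF c).erase (mu c A)).card = (BoxF c \ OmF c).card - 1 :=
      Finset.card_erase_of_mem hmu1
    have : ((GF c).filter (fun T => T ∩ ((OmF c).erase 0) = A)).card ≤
        ((BoxF c \ OmF c).erase (mu c A)).powerset.card := by
      apply Finset.card_le_card_of_injOn (fun T => (T \ OmF c).erase (mu c A))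
      · intro T hT
        simp only [Finset.mem_coe, Finset.mem_filter, GF, Finset.mem_powerset] at hT ⊢
        exact Finset.erase_subset_erase _ (Finset.sdiff_subset_sdiff hT.1.1 (le_refl _))
      · intro T1 hT1 T2 hT2 heq
        simp only [Finset.mem_coe, Finset.mem_filter, GF, Finset.mem_powerset] at hT1 hT2
        have hmu1' : mu c A ∈ T1 \ OmF c := by
          rw [Finset.mem_sdiff]
          have := hT1.1.2.2
          rw [hT1.2] at this
          exact ⟨this hAne, (Finset.mem_sdiff.mp hmu1).2⟩
        have hmu2' : mu c A ∈ T2 \ OmF c := by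
          rw [Finset.mem_sdiff]
          have := hT2.1.2.2
          rw [hT2.2] at this
          exact ⟨this hAne, (Finset.mem_sdiff.mp hmu1).2⟩
        have e1 : T1 \ OmF c = insert (mu c A) ((T1 \ OmF c).erase (mu c A)) :=
          (Finset.insert_erase hmu1').symm
        have e2 : T2 \ OmF c = insert (mu c A) ((T2 \ OmF c).erase (mu c A)) :=
          (Finset.insert_erase hmu2').symm
        have f1 := T_eq c hc hT1.1.2.1
        have f2 := T_eq c hc hT2.1.2.1
        rw [hT1.2] at f1
        rw [hT2.2] at f2
        rw [f1, f2, e1, e2]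
        exact congrArg (fun B => insert 0 A ∪ insert (mu c A) B) heq
    rw [Finset.card_powerset, hmucard] at this
    exact this

end Aux3

noncomputable section Aux4
open Classical

variable {d : ℕ} (c : Fin d → ℕ)

lemma GF_card_le (hc : ∀ i, 1 < c i) :
    (GF c).card ≤ 2 ^ ((BoxF c \ OmF c).card) +
      (2 ^ ((OmF c).card - 1) - 1) * 2 ^ ((BoxF c \ OmF c).card - 1) := by
  have h0Om : (0 : Fin d → ℕ) ∈ OmF c := zero_mem_OmF c hc
  set pw := ((OmF c).erase 0).powerset with hpw
  have hfib : (GF c).card =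
      ∑ A ∈ pw, ((GF c).filter (fun T => T ∩ ((OmF c).erase 0) = A)).card := by
    apply Finset.card_eq_sum_card_fiberwise
    intro T _
    rw [hpw, Finset.mem_coe, Finset.mem_powerset]
    exact Finset.inter_subset_right
  rw [hfib]
  have hsum : ∑ A ∈ pw, ((GF c).filter (fun T => T ∩ ((OmF c).erase 0) = A)).card ≤
      ∑ A ∈ pw, (if A = ∅ then 2 ^ ((BoxF c \ OmF c).card)
        else 2 ^ ((BoxF c \ OmF c).card - 1)) :=
    Finset.sum_le_sum fun A hA => fiber_card_le c hc A hA
  refine hsum.trans ?_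
  have hempty : (∅ : Finset (Fin d → ℕ)) ∈ pw := by
    rw [hpw, Finset.mem_powerset]; exact Finset.empty_subset _
  rw [← Finset.sum_filter_add_sum_filter_not pw (fun A => A = ∅)]
  have h1 : pw.filter (fun A => A = ∅) = {∅} := by
    rw [Finset.filter_eq', if_pos hempty]
  have h2 : pw.filter (fun A => ¬ A = ∅) = pw.erase ∅ := Finset.filter_ne' pw ∅
  rw [h1, h2]
  have h3 : ∑ A ∈ pw.erase ∅, (if A = ∅ then 2 ^ ((BoxF c \ OmF c).card)
      else 2 ^ ((BoxF c \ OmF c).card - 1)) =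
      (pw.erase ∅).card * 2 ^ ((BoxF c \ OmF c).card - 1) := by
    rw [Finset.sum_ite_of_false, Finset.sum_const, smul_eq_mul]
    intro A hA
    exact (Finset.mem_erase.mp hA).1
  rw [h3, Finset.sum_singleton, if_pos rfl]
  have h4 : (pw.erase ∅).card = 2 ^ ((OmF c).card - 1) - 1 := by
    rw [Finset.card_erase_of_mem hempty, hpw, Finset.card_powerset,
      Finset.card_erase_of_mem h0Om]
  rw [h4]

lemma arith (w b : ℕ) (hw : 1 ≤ w) (hb : 1 ≤ b) :
    2 ^ b + (2 ^ (w - 1) - 1) * 2 ^ (b - 1) ≤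
      2 ^ (w + b - 1) - (2 ^ (w - 1) - 1) * 2 ^ (w + b - w - 1) := by
  obtain ⟨w', rfl⟩ : ∃ w', w = w' + 1 := ⟨w - 1, by omega⟩
  obtain ⟨b', rfl⟩ : ∃ b', b = b' + 1 := ⟨b - 1, by omega⟩
  simp only [Nat.add_sub_cancel, show w' + 1 + (b' + 1) - 1 = w' + b' + 1 by omega,
    show w' + 1 + (b' + 1) - (w' + 1) - 1 = b' by omega]
  have h1 : 2 ^ (w' + b' + 1) = 2 * (2 ^ w' * 2 ^ b') := by
    rw [pow_succ, pow_add]; ring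
  have h2 : (2 ^ w' - 1) * 2 ^ b' = 2 ^ w' * 2 ^ b' - 2 ^ b' := by
    rw [Nat.sub_mul, one_mul]
  have h3 : 2 ^ b' ≤ 2 ^ w' * 2 ^ b' :=
    Nat.le_mul_of_pos_left _ (Nat.pow_pos (by norm_num))
  have h4 : 2 ^ (b' + 1) = 2 * 2 ^ b' := by rw [pow_succ]; ring
  omega

lemma main_inj (hc : ∀ i, 1 < c i) :
    {S : Set (Fin d → ℕ) | IsGNS S ∧ IsCornerOf S c}.ncard ≤ (GF c).card := by
  rw [← Set.ncard_coe_finset]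
  apply Set.ncard_le_ncard_of_injOn (fun S => (BoxF c).filter (· ∈ S))
  · rintro S ⟨⟨h0, hadd, _⟩, _, hbig, _⟩
    simp only [Finset.mem_coe, GF, Finset.mem_filter, Finset.mem_powerset]
    refine ⟨Finset.filter_subset _ _, ?_, ?_⟩
    · exact ⟨OmF_subset_BoxF c (zero_mem_OmF c hc), h0⟩
    · intro hAne
      set A := (BoxF c).filter (· ∈ S) ∩ ((OmF c).erase 0) with hA
      have hAsub : A ⊆ (OmF c).erase 0 := Finset.inter_subset_right
      obtain ⟨hmu_box, hmu_all⟩ := mu_spec c hc hAne hAsub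
      refine ⟨(Finset.mem_sdiff.mp hmu_box).1, ?_⟩
      apply hmu_all S hadd
      intro a ha
      have := Finset.mem_of_mem_inter_left (Finset.mem_coe.mp ha)
      exact (Finset.mem_filter.mp this).2
  · rintro S1 ⟨_, _, hbig1, _⟩ S2 ⟨_, _, hbig2, _⟩ heq
    ext x
    by_cases hx : ∀ i, x i < c i
    · have hxB : x ∈ BoxF c := (mem_BoxF c).mpr hx
      have heq' : (BoxF c).filter (· ∈ S1) = (BoxF c).filter (· ∈ S2) := heq
      constructor
      · intro hxS
        have h1 : x ∈ (BoxF c).filter (· ∈ S1) := Finset.mem_filter.mpr ⟨hxB, hxS⟩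
        rw [heq'] at h1
        exact (Finset.mem_filter.mp h1).2
      · intro hxS
        have h1 : x ∈ (BoxF c).filter (· ∈ S2) := Finset.mem_filter.mpr ⟨hxB, hxS⟩
        rw [← heq'] at h1
        exact (Finset.mem_filter.mp h1).2
    · push_neg at hx
      obtain ⟨i, hi⟩ := hx
      exact ⟨fun _ => hbig2 i x hi, fun _ => hbig1 i x hi⟩

end Aux4

lemma arith2 (w b : ℕ) (hw : 1 ≤ w) (h : 1 ≤ b ∨ w = 1) :
    2 ^ b + (2 ^ (w - 1) - 1) * 2 ^ (b - 1) ≤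
      2 ^ (w + b - 1) - (2 ^ (w - 1) - 1) * 2 ^ (w + b - w - 1) := by
  rcases h with hb | hw1
  · exact arith w b hw hb
  · subst hw1; simp

theorem upper_bound_number_of_GNS_with_corner {d : ℕ} (c : Fin d → ℕ)
    (hc : ∀ i, 1 < c i) :
    Set.ncard {S : Set (Fin d → ℕ) | IsGNS S ∧ IsCornerOf S c} ≤
      2 ^ ((∏ i : Fin d, c i) - 1) -
        (2 ^ (Set.ncard {x : Fin d → ℕ | ∀ i, x i < (c i + 1) / 2} - 1) - 1) *
          2 ^ ((∏ i : Fin d, c i) -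
            Set.ncard {x : Fin d → ℕ | ∀ i, x i < (c i + 1) / 2} - 1) := by
  classical
  have hω1 : 1 ≤ (OmF c).card := Finset.card_pos.mpr ⟨0, zero_mem_OmF c hc⟩
  have t_eq : ∏ i : Fin d, c i = (BoxF c).card := by
    simp only [BoxF, Fintype.card_piFinset, Finset.card_range]
  have hBox_card : (BoxF c).card = (OmF c).card + (BoxF c \ OmF c).card := by
    rw [Finset.card_sdiff_of_subset (OmF_subset_BoxF c)]
    have := Finset.card_le_card (OmF_subset_BoxF c)
    omega
  have hor : 1 ≤ (BoxF c \ OmF c).card ∨ (OmF c).card = 1 := by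
    rcases Nat.eq_zero_or_pos d with hd | hd
    · right
      subst hd
      simp only [OmF, Fintype.card_piFinset, Finset.card_range]
      simp
    · left
      apply Finset.card_pos.mpr
      refine ⟨fun i => (c i + 1) / 2, ?_⟩
      rw [Finset.mem_sdiff, mem_BoxF, mem_OmF]
      constructor
      · intro i; have := hc i; omega
      · push_neg
        exact ⟨⟨0, hd⟩, le_refl _⟩
  have hncard_Om : Set.ncard {x : Fin d → ℕ | ∀ i, x i < (c i + 1) / 2} = (OmF c).card := by
    have h : {x : Fin d → ℕ | ∀ i, x i < (c i + 1) / 2} = ↑(OmF c) := by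
      ext x; simp [mem_OmF]
    rw [h, Set.ncard_coe_finset]
  calc Set.ncard {S : Set (Fin d → ℕ) | IsGNS S ∧ IsCornerOf S c}
      ≤ (GF c).card := main_inj c hc
    _ ≤ 2 ^ ((BoxF c \ OmF c).card) +
        (2 ^ ((OmF c).card - 1) - 1) * 2 ^ ((BoxF c \ OmF c).card - 1) := GF_card_le c hc
    _ ≤ _ := by
        rw [hncard_Om, t_eq, hBox_card]
        exact arith2 _ _ hω1 hor
end
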